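/- arXiv:2501.12046 — 11 statements merged into one kernel-verified Lean document; each statement's English description precedes it below -/
import Mathlib

section
/- Let n ≥ 1, let G be a nonsingular real n×n matrix, and let P ⊆ ℝⁿ be a basic cell of the lattice Gℤⁿ, i.e., a bounded measurable set of positive finite Lebesgue measure whose translates (P + Gj)_{j∈ℤⁿ} partition ℝⁿ. Let Q_P : ℝⁿ → ℝⁿ be the lattice quantizer for P, i.e., for every y ∈ ℝⁿ, Q_P(y) ∈ Gℤⁿ and y ∈ −P + Q_P(y). Then for every fixed x ∈ ℝⁿ, the pushforward of the uniform probability measure Unif(P) under the map v ↦ Q_P(x − v) + v − x equals Unif(P). (Subtractive dithered quantization error is uniform over the basic cell, regardless of the input.) -/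
open MeasureTheory

/-- `Unif A`: the uniform probability measure on a set `A ⊆ ℝⁿ`, i.e. Lebesgue measure
restricted to `A` and normalized by the volume of `A`. -/
noncomputable def Unif {n : ℕ} (A : Set (Fin n → ℝ)) : Measure (Fin n → ℝ) :=
  (volume A)⁻¹ • volume.restrict A

/-- **Subtractive dithered quantization error is uniform over the basic cell.**
Let `P` be a basic cell of the lattice `Gℤⁿ` (a bounded measurable set of positive finite
volume whose translates by lattice points partition `ℝⁿ`), and let `Q_P` be the lattice
quantizer (for each `y`, `Q_P y` is a lattice point and `Q_P y − y ∈ P`). Then for every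
input `x`, the pushforward of `Unif P` under `v ↦ Q_P(x − v) + v − x` equals `Unif P`. -/
theorem sdq_error_uniform {n : ℕ} (hn : 1 ≤ n)
    (G : Matrix (Fin n) (Fin n) ℝ) (hG : IsUnit G.det)
    (P : Set (Fin n → ℝ)) (hPmeas : MeasurableSet P) (hPbdd : Bornology.IsBounded P)
    (hP0 : 0 < volume P) (hPfin : volume P < ⊤)
    (hpart : ∀ x : Fin n → ℝ, ∃! j : Fin n → ℤ,
      x - G.mulVec (fun i => (j i : ℝ)) ∈ P)
    (QP : (Fin n → ℝ) → (Fin n → ℝ)) (hQmeas : Measurable QP)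
    (hQlat : ∀ y : Fin n → ℝ, ∃ j : Fin n → ℤ, QP y = G.mulVec (fun i => (j i : ℝ)))
    (hQcell : ∀ y : Fin n → ℝ, QP y - y ∈ P)
    (x : Fin n → ℝ) :
    Measure.map (fun v => QP (x - v) + v - x) (Unif P) = Unif P := by
  set L : (Fin n → ℤ) → (Fin n → ℝ) := fun k => G.mulVec (fun i => (k i : ℝ)) with hL
  have hLneg : ∀ k, L (-k) = -L k := by
    intro k
    have : (fun i => (((-k) i : ℤ) : ℝ)) = -(fun i => ((k i : ℤ) : ℝ)) := by
      funext i; simp only [Pi.neg_apply]; push_cast; ring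
    simp only [hL, this, Matrix.mulVec_neg]
  -- uniqueness of the lattice point
  have huniq : ∀ (z : Fin n → ℝ) (k k' : Fin n → ℤ),
      z - L k ∈ P → z - L k' ∈ P → k = k' := by
    intro z k k' h1 h2
    exact ((hpart z).unique h1 h2)
  -- the quantizer is determined by membership
  have hQeq : ∀ (v : Fin n → ℝ) (k : Fin n → ℤ), L k + v - x ∈ P → QP (x - v) = L k := by
    intro v k hk
    obtain ⟨k', hk'⟩ := hQlat (x - v)
    have h1 : (v - x) - L (-k') ∈ P := by
      have := hQcell (x - v)
      rw [hk'] at this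
      rw [hLneg]
      have e : (v - x) - -L k' = L k' - (x - v) := by abel
      rw [e]; exact this
    have h2 : (v - x) - L (-k) ∈ P := by
      rw [hLneg]
      have e : (v - x) - -L k = L k + v - x := by abel
      rw [e]; exact hk
    have : (-k : Fin n → ℤ) = -k' := huniq (v - x) (-k) (-k') h2 h1
    have hkk : k = k' := by
      have := congrArg Neg.neg this; simpa using this
    rw [hk', hkk]
  set f : (Fin n → ℝ) → (Fin n → ℝ) := fun v => QP (x - v) + v - x with hf
  have hfmeas : Measurable f :=
    ((hQmeas.comp (measurable_const.sub measurable_id)).add measurable_id).sub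
      measurable_const
  -- the pieces
  set Pk : (Fin n → ℤ) → Set (Fin n → ℝ) := fun k => P ∩ {v | L k + v - x ∈ P} with hPk
  set T : (Fin n → ℤ) → Set (Fin n → ℝ) := fun k => P ∩ {w | x + w - L k ∈ P} with hT
  have hPkmeas : ∀ k, MeasurableSet (Pk k) := fun k =>
    hPmeas.inter (((measurable_const.add measurable_id).sub measurable_const) hPmeas)
  have hTmeas : ∀ k, MeasurableSet (T k) := fun k =>
    hPmeas.inter (((measurable_const.add measurable_id).sub measurable_const) hPmeas)
  -- Pk covers P
  have hPkcover : P = ⋃ k, Pk k := by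
    apply Set.Subset.antisymm
    · intro v hv
      obtain ⟨j, hj, -⟩ := hpart (v - x)
      refine Set.mem_iUnion.2 ⟨-j, hv, ?_⟩
      show L (-j) + v - x ∈ P
      rw [hLneg]
      have e : -L j + v - x = (v - x) - L j := by abel
      rw [e]; exact hj
    · exact Set.iUnion_subset fun k => Set.inter_subset_left
  have hPkdisj : Pairwise (Function.onFun Disjoint Pk) := by
    intro k k' hne
    show Disjoint (Pk k) (Pk k')
    rw [Set.disjoint_left]
    rintro v ⟨-, hv1⟩ ⟨-, hv2⟩
    apply hne
    have h1 : (v - x) - L (-k) ∈ P := by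
      rw [hLneg]
      have e : (v - x) - -L k = L k + v - x := by abel
      rw [e]; exact hv1
    have h2 : (v - x) - L (-k') ∈ P := by
      rw [hLneg]
      have e : (v - x) - -L k' = L k' + v - x := by abel
      rw [e]; exact hv2
    have := huniq (v - x) (-k) (-k') h1 h2
    have := congrArg Neg.neg this; simpa using this
  -- T covers P
  have hTcover : P = ⋃ k, T k := by
    apply Set.Subset.antisymm
    · intro w hw
      obtain ⟨j, hj, -⟩ := hpart (x + w)
      refine Set.mem_iUnion.2 ⟨j, hw, ?_⟩
      show x + w - L j ∈ P
      exact hj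
    · exact Set.iUnion_subset fun k => Set.inter_subset_left
  have hTdisj : Pairwise (Function.onFun Disjoint T) := by
    intro k k' hne
    show Disjoint (T k) (T k')
    rw [Set.disjoint_left]
    rintro w ⟨-, hw1⟩ ⟨-, hw2⟩
    exact hne (huniq (x + w) k k' hw1 hw2)
  -- the key set identity: f⁻¹ S ∩ Pk k is the preimage of S ∩ T k under translation
  have hkey : ∀ (S : Set (Fin n → ℝ)) (k : Fin n → ℤ),
      f ⁻¹' S ∩ Pk k = (fun v => v + (L k - x)) ⁻¹' (S ∩ T k) := by
    intro S k
    ext v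
    constructor
    · rintro ⟨hvS, hvP, hvk⟩
      have hQ : QP (x - v) = L k := hQeq v k hvk
      have hfv : f v = v + (L k - x) := by
        show QP (x - v) + v - x = v + (L k - x)
        rw [hQ]; abel
      refine ⟨?_, ?_, ?_⟩
      · show v + (L k - x) ∈ S
        rw [← hfv]; exact hvS
      · show v + (L k - x) ∈ P
        have e : v + (L k - x) = L k + v - x := by abel
        rw [e]; exact hvk
      · show x + (v + (L k - x)) - L k ∈ P
        have e : x + (v + (L k - x)) - L k = v := by abel
        rw [e]; exact hvP
    · rintro ⟨hS', hP', hT'⟩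
      have hvP : v ∈ P := by
        have e : x + (v + (L k - x)) - L k = v := by abel
        rw [Set.mem_setOf_eq, e] at hT'
        exact hT'
      have hvk : L k + v - x ∈ P := by
        have e : L k + v - x = v + (L k - x) := by abel
        rw [e]; exact hP'
      have hQ : QP (x - v) = L k := hQeq v k hvk
      have hfv : f v = v + (L k - x) := by
        show QP (x - v) + v - x = v + (L k - x)
        rw [hQ]; abel
      exact ⟨by rw [Set.mem_preimage, hfv]; exact hS', hvP, hvk⟩
  -- the restricted volume is preserved
  have hmain : Measure.map f (volume.restrict P) = volume.restrict P := by
    ext S hS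
    rw [Measure.map_apply hfmeas hS, Measure.restrict_apply (hfmeas hS),
      Measure.restrict_apply hS]
    have h1 : f ⁻¹' S ∩ P = ⋃ k, f ⁻¹' S ∩ Pk k := by
      rw [← Set.inter_iUnion, ← hPkcover]
    have h2 : S ∩ P = ⋃ k, S ∩ T k := by
      rw [← Set.inter_iUnion, ← hTcover]
    rw [h1, h2]
    rw [measure_iUnion (fun k k' hne => (hPkdisj hne).mono
        Set.inter_subset_right Set.inter_subset_right)
      (fun k => (hfmeas hS).inter (hPkmeas k))]
    rw [measure_iUnion (fun k k' hne => (hTdisj hne).mono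
        Set.inter_subset_right Set.inter_subset_right)
      (fun k => hS.inter (hTmeas k))]
    congr 1
    funext k
    rw [hkey S k]
    exact measure_preimage_add_right volume (L k - x) (S ∩ T k)
  show Measure.map f ((volume P)⁻¹ • volume.restrict P) = (volume P)⁻¹ • volume.restrict P
  rw [Measure.map_smul, hmain]
end

section
/- Let μ be a probability measure on a measurable space E and let A ⊆ E be measurable with μ(A) > 0. On the countably infinite product probability space (E^ℕ, μ^⊗ℕ) of i.i.d. samples from μ, define H(ω) to be the least index i with ω_i ∈ A. Then H is almost surely finite, and the law of the first accepted sample ω ↦ ω_{H(ω)} equals the conditional probability measure μ(· ∩ A)/μ(A). (Correctness of rejection sampling.) -/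
open MeasureTheory ProbabilityTheory

/-- **Correctness of rejection sampling.**
Let `μ` be a probability measure on `E` and `A` a measurable set with `μ A > 0`.
Let `ν` be the law of a countably infinite i.i.d. sequence of samples from `μ`
(formalized as: a probability measure on `ℕ → E` whose coordinate projections are
independent and each distributed according to `μ`, which characterizes the infinite
product measure `μ^⊗ℕ`). Define `H ω` to be the least index `i` with `ω i ∈ A`.
Then `H` is almost surely finite, and the law of the first accepted sample
`ω ↦ ω (H ω)` equals the conditional measure `μ(· ∩ A)/μ(A)`. -/
theorem rejection_sampling_correct {E : Type*} [MeasurableSpace E]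
    (μ : Measure E) [IsProbabilityMeasure μ]
    (A : Set E) (hA : MeasurableSet A) (hA0 : 0 < μ A)
    (ν : Measure (ℕ → E)) [IsProbabilityMeasure ν]
    (hindep : iIndepFun (fun (i : ℕ) (ω : ℕ → E) => ω i) ν)
    (hlaw : ∀ i : ℕ, Measure.map (fun ω : ℕ → E => ω i) ν = μ) :
    (∀ᵐ ω ∂ν, ∃ i : ℕ, ω i ∈ A) ∧
      Measure.map (fun ω : ℕ → E => ω (sInf {i : ℕ | ω i ∈ A})) ν
        = (μ A)⁻¹ • μ.restrict A := by
  classical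
  set q := μ Aᶜ with hqdef
  have hq1 : q < 1 := by
    rw [hqdef, prob_compl_eq_one_sub hA]
    exact ENNReal.sub_lt_self ENNReal.one_ne_top one_ne_zero hA0.ne'
  have h1q : 1 - q = μ A := by
    rw [hqdef, prob_compl_eq_one_sub hA,
      ENNReal.sub_sub_cancel ENNReal.one_ne_top prob_le_one]
  have hpi : ∀ i : ℕ, Measurable (fun ω : ℕ → E => ω i) := fun i => measurable_pi_apply i
  -- characterization of sInf
  have hsInf_eq : ∀ (ω : ℕ → E) (n : ℕ), ω n ∈ A → (∀ m, m < n → ω m ∉ A) →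
      sInf {i | ω i ∈ A} = n := by
    intro ω n hn hm
    refine le_antisymm (Nat.sInf_le hn) (le_of_not_gt fun h => hm _ h ?_)
    exact Nat.sInf_mem (⟨n, hn⟩ : Set.Nonempty {i | ω i ∈ A})
  -- measurability of level sets of H
  have hHset : ∀ n : ℕ, MeasurableSet {ω : ℕ → E | sInf {i | ω i ∈ A} = n} := by
    intro n
    rcases Nat.eq_zero_or_pos n with rfl | hn
    · have hset : {ω : ℕ → E | sInf {i | ω i ∈ A} = 0}
          = (fun ω : ℕ → E => ω 0) ⁻¹' A ∪ ⋂ i, (fun ω : ℕ → E => ω i) ⁻¹' Aᶜ := by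
        ext ω
        simp only [Set.mem_setOf_eq, Nat.sInf_eq_zero, Set.mem_union, Set.mem_preimage,
          Set.mem_iInter, Set.mem_compl_iff]
        constructor
        · rintro (h | h)
          · exact Or.inl h
          · exact Or.inr fun i hi => Set.eq_empty_iff_forall_notMem.1 h i hi
        · rintro (h | h)
          · exact Or.inl h
          · exact Or.inr (Set.eq_empty_iff_forall_notMem.2 h)
      rw [hset]
      exact ((hpi 0) hA).union (MeasurableSet.iInter fun i => (hpi i) hA.compl)
    · have hset : {ω : ℕ → E | sInf {i | ω i ∈ A} = n}
          = (fun ω : ℕ → E => ω n) ⁻¹' A ∩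
            ⋂ i ∈ Finset.range n, (fun ω : ℕ → E => ω i) ⁻¹' Aᶜ := by
        ext ω
        simp only [Set.mem_setOf_eq, Set.mem_inter_iff, Set.mem_preimage, Set.mem_iInter,
          Finset.mem_range, Set.mem_compl_iff]
        constructor
        · intro h
          have hne : {i | ω i ∈ A}.Nonempty := by
            by_contra hc
            rw [Set.not_nonempty_iff_eq_empty] at hc
            rw [hc, Nat.sInf_empty] at h
            omega
          exact ⟨h ▸ Nat.sInf_mem hne, fun i hi => Nat.notMem_of_lt_sInf (h ▸ hi)⟩
        · rintro ⟨h1, h2⟩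
          exact hsInf_eq ω n h1 h2
      rw [hset]
      exact ((hpi n) hA).inter
        (MeasurableSet.iInter fun i => MeasurableSet.iInter fun _ => (hpi i) hA.compl)
  -- measurability of the first accepted sample
  have hf : Measurable (fun ω : ℕ → E => ω (sInf {i | ω i ∈ A})) := by
    intro B hB
    have hset : (fun ω : ℕ → E => ω (sInf {i | ω i ∈ A})) ⁻¹' B
        = ⋃ n, {ω : ℕ → E | sInf {i | ω i ∈ A} = n} ∩ (fun ω : ℕ → E => ω n) ⁻¹' B := by
      ext ω
      simp only [Set.mem_preimage, Set.mem_iUnion, Set.mem_inter_iff, Set.mem_setOf_eq]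
      constructor
      · intro h; exact ⟨_, rfl, h⟩
      · rintro ⟨n, rfl, h⟩; exact h
    rw [hset]
    exact MeasurableSet.iUnion fun n => (hHset n).inter (hpi n hB)
  -- coordinate laws
  have hcoord : ∀ (i : ℕ) (C : Set E), MeasurableSet C →
      ν ((fun ω : ℕ → E => ω i) ⁻¹' C) = μ C := by
    intro i C hC
    rw [← hlaw i, Measure.map_apply (hpi i) hC]
  -- the key independence computation
  have key : ∀ (n : ℕ) (B : Set E), MeasurableSet B →
      ν ((fun ω : ℕ → E => ω n) ⁻¹' B ∩
          ⋂ i ∈ Finset.range n, (fun ω : ℕ → E => ω i) ⁻¹' Aᶜ)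
        = μ B * q ^ n := by
    intro n B hB
    have hsets : ∀ i : ℕ, i ∈ Finset.range (n + 1) →
        MeasurableSet (if i = n then B else Aᶜ) := by
      intro i _
      by_cases h : i = n <;> simp [h, hB, hA.compl]
    have hmain := hindep.measure_inter_preimage_eq_mul (S := Finset.range (n + 1))
      (sets := fun i => if i = n then B else Aᶜ) hsets
    have hset : (⋂ i ∈ Finset.range (n + 1),
          (fun ω : ℕ → E => ω i) ⁻¹' (if i = n then B else Aᶜ))
        = (fun ω : ℕ → E => ω n) ⁻¹' B ∩
          ⋂ i ∈ Finset.range n, (fun ω : ℕ → E => ω i) ⁻¹' Aᶜ := by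
      ext ω
      simp only [Set.mem_iInter, Finset.mem_range, Set.mem_inter_iff, Set.mem_preimage,
        Nat.lt_succ_iff_lt_or_eq]
      constructor
      · intro h
        refine ⟨by simpa using h n (Or.inr rfl), fun i hi => ?_⟩
        simpa [Nat.ne_of_lt hi] using h i (Or.inl hi)
      · rintro ⟨h1, h2⟩ i (hi | rfl)
        · simpa [Nat.ne_of_lt hi] using h2 i hi
        · simpa using h1
    rw [hset] at hmain
    rw [hmain]
    have hprod : ∀ i : ℕ, ν ((fun ω : ℕ → E => ω i) ⁻¹' (if i = n then B else Aᶜ))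
        = if i = n then μ B else q := by
      intro i
      by_cases h : i = n
      · rw [if_pos h, if_pos h]; exact hcoord i B hB
      · rw [if_neg h, if_neg h]; exact hcoord i Aᶜ hA.compl
    calc ∏ i ∈ Finset.range (n + 1), ν ((fun ω : ℕ → E => ω i) ⁻¹' (if i = n then B else Aᶜ))
        = ∏ i ∈ Finset.range (n + 1), (if i = n then μ B else q) :=
          Finset.prod_congr rfl fun i _ => hprod i
      _ = μ B * q ^ n := by
          rw [Finset.prod_range_succ, if_pos rfl,
            Finset.prod_congr rfl (fun i hi => if_neg (Nat.ne_of_lt (Finset.mem_range.1 hi))),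
            Finset.prod_const, Finset.card_range, mul_comm]
  -- the "never accepted" event is null
  have hinf : ν (⋂ i, (fun ω : ℕ → E => ω i) ⁻¹' Aᶜ) = 0 := by
    have hle : ∀ n : ℕ, ν (⋂ i, (fun ω : ℕ → E => ω i) ⁻¹' Aᶜ) ≤ q ^ n := by
      intro n
      have hsub : (⋂ i, (fun ω : ℕ → E => ω i) ⁻¹' Aᶜ)
          ⊆ (fun ω : ℕ → E => ω n) ⁻¹' Aᶜ ∩
            ⋂ i ∈ Finset.range n, (fun ω : ℕ → E => ω i) ⁻¹' Aᶜ := by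
        intro ω hω
        exact ⟨Set.mem_iInter.1 hω n, Set.mem_iInter₂.2 fun i _ => Set.mem_iInter.1 hω i⟩
      calc ν (⋂ i, (fun ω : ℕ → E => ω i) ⁻¹' Aᶜ)
          ≤ μ Aᶜ * q ^ n := le_trans (measure_mono hsub) (le_of_eq (key n Aᶜ hA.compl))
        _ ≤ q ^ n := mul_le_of_le_one_left zero_le hq1.le
    have htend := ENNReal.tendsto_pow_atTop_nhds_zero_of_lt_one hq1
    exact le_antisymm (ge_of_tendsto' htend hle) zero_le
  have hae : ∀ᵐ ω ∂ν, ∃ i : ℕ, ω i ∈ A := by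
    rw [ae_iff]
    have hset : {ω : ℕ → E | ¬∃ i, ω i ∈ A} = ⋂ i, (fun ω : ℕ → E => ω i) ⁻¹' Aᶜ := by
      ext ω; simp [not_exists]
    rw [hset]; exact hinf
  refine ⟨hae, ?_⟩
  ext B hB
  rw [Measure.map_apply hf hB, Measure.smul_apply, Measure.restrict_apply hB, smul_eq_mul]
  set D : ℕ → Set (ℕ → E) := fun n =>
    (fun ω : ℕ → E => ω n) ⁻¹' (A ∩ B) ∩
      ⋂ i ∈ Finset.range n, (fun ω : ℕ → E => ω i) ⁻¹' Aᶜ with hDdef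
  have hDmeas : ∀ n, MeasurableSet (D n) := fun n =>
    ((hpi n) (hA.inter hB)).inter
      (MeasurableSet.iInter fun i => MeasurableSet.iInter fun _ => (hpi i) hA.compl)
  have hDval : ∀ n, ν (D n) = μ (A ∩ B) * q ^ n := fun n => key n (A ∩ B) (hA.inter hB)
  have hdisj : Pairwise (Function.onFun Disjoint D) := by
    have haux : ∀ m n : ℕ, m < n → Disjoint (D m) (D n) := by
      intro m n hmn
      rw [Set.disjoint_left]
      rintro ω ⟨h1, -⟩ ⟨-, h2⟩
      exact (Set.mem_iInter₂.1 h2 m (Finset.mem_range.2 hmn)) h1.1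
    intro m n hmn
    rcases hmn.lt_or_gt with h | h
    · exact haux m n h
    · exact (haux n m h).symm
  -- the preimage equals ⋃ D n up to the null event
  set f : (ℕ → E) → E := fun ω => ω (sInf {i | ω i ∈ A}) with hfdef
  have hsub1 : (⋃ n, D n) ⊆ f ⁻¹' B := by
    rintro ω hω
    obtain ⟨n, hn⟩ := Set.mem_iUnion.1 hω
    obtain ⟨⟨hnA, hnB⟩, hlt⟩ := hn
    have : sInf {i | ω i ∈ A} = n :=
      hsInf_eq ω n hnA fun m hm => Set.mem_iInter₂.1 hlt m (Finset.mem_range.2 hm)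
    simpa [hfdef, Set.mem_preimage, this] using hnB
  have hsub2 : f ⁻¹' B ⊆ (⋃ n, D n) ∪ ⋂ i, (fun ω : ℕ → E => ω i) ⁻¹' Aᶜ := by
    intro ω hω
    by_cases hS : ∃ i, ω i ∈ A
    · left
      obtain ⟨i, hi⟩ := hS
      have hne : {i | ω i ∈ A}.Nonempty := ⟨i, hi⟩
      refine Set.mem_iUnion.2 ⟨sInf {i | ω i ∈ A}, ⟨⟨Nat.sInf_mem hne, hω⟩, ?_⟩⟩
      exact Set.mem_iInter₂.2 fun m hm =>
        Nat.notMem_of_lt_sInf (Finset.mem_range.1 hm)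
    · right
      exact Set.mem_iInter.2 fun i h => hS ⟨i, h⟩
  have hnu : ν (f ⁻¹' B) = ν (⋃ n, D n) := by
    refine le_antisymm ?_ (measure_mono hsub1)
    calc ν (f ⁻¹' B) ≤ ν (⋃ n, D n) + ν (⋂ i, (fun ω : ℕ → E => ω i) ⁻¹' Aᶜ) :=
          le_trans (measure_mono hsub2) (measure_union_le _ _)
      _ = ν (⋃ n, D n) := by rw [hinf, add_zero]
  rw [hnu, measure_iUnion hdisj hDmeas]
  simp only [hDval]
  rw [ENNReal.tsum_mul_left, ENNReal.tsum_geometric, h1q, Set.inter_comm, mul_comm]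
end

section
/- Let n ≥ 1, let G be a nonsingular real n×n matrix, let P ⊆ ℝⁿ be a basic cell of the lattice Gℤⁿ with lattice quantizer Q_P, and let A ⊆ P be measurable with vol(A) > 0. Fix x ∈ ℝⁿ. Let V₁, V₂, … be i.i.d. with law Unif(P) (coordinates of the infinite product measure), and let H be the least index i such that Q_P(x − V_i) + V_i − x ∈ A. Then H is almost surely finite, and the quantization error Z := Q_P(x − V_H) + V_H − x of the rejection-sampled universal quantizer has law Unif(A), for every input x. (Proposition: the RSUQ quantization error is uniformly distributed over A.) -/
open MeasureTheory ProbabilityTheory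

lemma crypto_aux {n : ℕ}
    (G : Matrix (Fin n) (Fin n) ℝ) (hG : IsUnit G.det)
    (P : Set (Fin n → ℝ)) (hPmeas : MeasurableSet P)
    (hpart : ∀ x : Fin n → ℝ, ∃! j : Fin n → ℤ,
      x - G.mulVec (fun i => (j i : ℝ)) ∈ P)
    (QP : (Fin n → ℝ) → (Fin n → ℝ)) (hQmeas : Measurable QP)
    (hQlat : ∀ y : Fin n → ℝ, ∃ j : Fin n → ℤ, QP y = G.mulVec (fun i => (j i : ℝ)))
    (hQcell : ∀ y : Fin n → ℝ, QP y - y ∈ P)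
    (x : Fin n → ℝ) (S : Set (Fin n → ℝ)) (hS : MeasurableSet S) :
    volume (P ∩ (fun v => QP (x - v) + v - x) ⁻¹' S) = volume (P ∩ S) := by
  classical
  set L : (Fin n → ℤ) → (Fin n → ℝ) := fun j => G.mulVec (fun i => (j i : ℝ)) with hLdef
  have hLinj : Function.Injective L := by
    intro j j' h
    have hinj : Function.Injective G.mulVec :=
      Matrix.mulVec_injective_iff_isUnit.2 ((Matrix.isUnit_iff_isUnit_det G).2 hG)
    have h2 := hinj h
    funext i
    exact_mod_cast congrFun h2 i
  have hLsub : ∀ j k : Fin n → ℤ, L (j - k) = L j - L k := by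
    intro j k
    have : (fun i => (((j - k) i : ℤ) : ℝ)) = (fun i => (j i : ℝ)) - (fun i => (k i : ℝ)) := by
      funext i; simp [Pi.sub_apply]
    simp only [hLdef, this, Matrix.mulVec_sub]
  have hL0 : L 0 = 0 := by
    have h : (fun i => (((0 : Fin n → ℤ) i : ℤ) : ℝ)) = (0 : Fin n → ℝ) := by
      funext i; simp
    show G.mulVec (fun i => (((0 : Fin n → ℤ) i : ℤ) : ℝ)) = 0
    rw [h, Matrix.mulVec_zero]
  set g : (Fin n → ℝ) → (Fin n → ℝ) := fun v => QP (x - v) + v - x with hgdef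
  have hgmeas : Measurable g :=
    ((hQmeas.comp (measurable_const.sub measurable_id)).add measurable_id).sub measurable_const
  have hgP : ∀ v, g v ∈ P := by
    intro v
    have h := hQcell (x - v)
    have : QP (x - v) - (x - v) = g v := by simp only [hgdef]; abel
    rwa [this] at h
  set T : (Fin n → ℤ) → Set (Fin n → ℝ) :=
    fun j => P ∩ (fun v => QP (x - v)) ⁻¹' {L j} with hTdef
  have hTmeas : ∀ j, MeasurableSet (T j) :=
    fun j => hPmeas.inter ((hQmeas.comp (measurable_const.sub measurable_id))
      (measurableSet_singleton (L j)))
  set c : (Fin n → ℤ) → (Fin n → ℝ) := fun j => L j - x with hcdef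
  set U : (Fin n → ℤ) → Set (Fin n → ℝ) := fun j => (fun w => w - c j) ⁻¹' T j with hUdef
  have hUmeas : ∀ j, MeasurableSet (U j) :=
    fun j => (measurable_id.sub measurable_const) (hTmeas j)
  have hTg : ∀ j, ∀ v ∈ T j, g v = v + c j := by
    intro j v hv
    have hq : QP (x - v) = L j := hv.2
    simp only [hgdef, hcdef, hq]; abel
  -- U j ⊆ P
  have hUP : ∀ j, U j ⊆ P := by
    intro j w hw
    have hv : w - c j ∈ T j := hw
    have := hTg j _ hv
    have hw' : g (w - c j) = w := by rw [this]; abel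
    rw [← hw']; exact hgP _
  -- P ⊆ ⋃ U j
  have hUcover : P ⊆ ⋃ j, U j := by
    intro w hw
    obtain ⟨j, hj, hjuniq⟩ := hpart (w + x)
    set v : Fin n → ℝ := w + x - L j with hvdef
    have hvP : v ∈ P := hj
    have hxv : x - v = L j - w := by simp only [hvdef]; abel
    obtain ⟨k, hk⟩ := hQlat (L j - w)
    have hcell := hQcell (L j - w)
    rw [hk] at hcell
    obtain ⟨m, hm, hmu⟩ := hpart w
    have h1 : (fun i => j i - k i : Fin n → ℤ) = m := by
      apply hmu
      have : L (j - k) = L j - L k := hLsub j k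
      have he : w - L (j - k) = L k - (L j - w) := by rw [this]; abel
      have : w - L (j - k) ∈ P := by rw [he]; exact hcell
      exact this
    have h0 : (0 : Fin n → ℤ) = m := by
      apply hmu
      show w - L 0 ∈ P
      rw [hL0]
      simpa using hw
    have hkj : k = j := by
      have : (fun i => j i - k i : Fin n → ℤ) = 0 := h1.trans h0.symm
      funext i
      have h : j i - k i = 0 := congrFun this i
      omega
    have hQ : QP (x - v) = L j := by rw [hxv, hk, hkj]
    refine Set.mem_iUnion.2 ⟨j, ?_⟩
    show w - c j ∈ T j
    have : w - c j = v := by simp only [hcdef, hvdef]; abel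
    rw [this]
    exact ⟨hvP, hQ⟩
  have hUeq : (⋃ j, U j) = P := le_antisymm (Set.iUnion_subset hUP) hUcover
  -- disjointness
  have hUdisj : Pairwise (Function.onFun Disjoint U) := by
    intro j j' hne
    rw [Function.onFun, Set.disjoint_left]
    intro w hwj hwj'
    obtain ⟨m, hm, hmu⟩ := hpart (w + x)
    have e1 : j = m := by
      apply hmu
      have h : w - c j ∈ T j := hwj
      have : (w + x) - L j = w - c j := by simp only [hcdef]; abel
      rw [this]; exact h.1
    have e2 : j' = m := by
      apply hmu
      have h : w - c j' ∈ T j' := hwj'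
      have : (w + x) - L j' = w - c j' := by simp only [hcdef]; abel
      rw [this]; exact h.1
    exact hne (e1.trans e2.symm)
  have hTdisj : Pairwise (Function.onFun Disjoint T) := by
    intro j j' hne
    rw [Function.onFun, Set.disjoint_left]
    intro v hvj hvj'
    exact hne (hLinj (hvj.2.symm.trans hvj'.2))
  -- key decomposition
  have hTcover : P ∩ g ⁻¹' S = ⋃ j, (T j ∩ g ⁻¹' S) := by
    ext v
    simp only [Set.mem_inter_iff, Set.mem_iUnion]
    constructor
    · rintro ⟨hvP, hvS⟩
      obtain ⟨k, hk⟩ := hQlat (x - v)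
      exact ⟨k, ⟨hvP, hk⟩, hvS⟩
    · rintro ⟨k, ⟨hvP, _⟩, hvS⟩
      exact ⟨hvP, hvS⟩
  have hkey : ∀ j, T j ∩ g ⁻¹' S = (fun v => v + c j) ⁻¹' (U j ∩ S) := by
    intro j
    ext v
    simp only [Set.mem_inter_iff, Set.mem_preimage, hUdef]
    have hvc : v + c j - c j = v := by abel
    rw [hvc]
    constructor
    · rintro ⟨hT, hS'⟩
      exact ⟨hT, by rwa [← hTg j v hT]⟩
    · rintro ⟨hT, hS'⟩
      exact ⟨hT, by rwa [hTg j v hT]⟩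
  calc volume (P ∩ g ⁻¹' S) = volume (⋃ j, (T j ∩ g ⁻¹' S)) := by rw [hTcover]
    _ = ∑' j, volume (T j ∩ g ⁻¹' S) := by
        refine measure_iUnion ?_ (fun j => (hTmeas j).inter (hgmeas hS))
        exact fun j j' hne => Set.disjoint_left.2 fun v hv hv' =>
          Set.disjoint_left.1 (hTdisj hne) hv.1 hv'.1
    _ = ∑' j, volume (U j ∩ S) := by
        refine tsum_congr fun j => ?_
        rw [hkey j]
        exact measure_preimage_add_right volume (c j) _
    _ = volume (⋃ j, (U j ∩ S)) := by
        refine (measure_iUnion ?_ (fun j => (hUmeas j).inter hS)).symm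
        exact fun j j' hne => Set.disjoint_left.2 fun v hv hv' =>
          Set.disjoint_left.1 (hUdisj hne) hv.1 hv'.1
    _ = volume (P ∩ S) := by rw [← Set.iUnion_inter, hUeq]

/-- **The RSUQ quantization error is uniformly distributed over `A`.**
Let `P` be a basic cell of the lattice `Gℤⁿ` with lattice quantizer `Q_P`, and let
`A ⊆ P` be measurable with positive volume. Fix an input `x`. Let `V₀, V₁, …` be i.i.d.
dithers with law `Unif P` (formalized as: a probability measure `ν` on `ℕ → ℝⁿ` whose
coordinates are independent, each with law `Unif P`), and let `H` be the least index `i`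
with `Q_P(x − V_i) + V_i − x ∈ A`. Then `H` is almost surely finite, and the
rejection-sampled universal quantizer's error `Z = Q_P(x − V_H) + V_H − x`
has law `Unif A`. -/
theorem rsuq_error_uniform {n : ℕ} (hn : 1 ≤ n)
    (G : Matrix (Fin n) (Fin n) ℝ) (hG : IsUnit G.det)
    (P : Set (Fin n → ℝ)) (hPmeas : MeasurableSet P) (hPbdd : Bornology.IsBounded P)
    (hP0 : 0 < volume P) (hPfin : volume P < ⊤)
    (hpart : ∀ x : Fin n → ℝ, ∃! j : Fin n → ℤ,
      x - G.mulVec (fun i => (j i : ℝ)) ∈ P)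
    (QP : (Fin n → ℝ) → (Fin n → ℝ)) (hQmeas : Measurable QP)
    (hQlat : ∀ y : Fin n → ℝ, ∃ j : Fin n → ℤ, QP y = G.mulVec (fun i => (j i : ℝ)))
    (hQcell : ∀ y : Fin n → ℝ, QP y - y ∈ P)
    (A : Set (Fin n → ℝ)) (hAmeas : MeasurableSet A) (hAP : A ⊆ P) (hA0 : 0 < volume A)
    (x : Fin n → ℝ)
    (ν : Measure (ℕ → (Fin n → ℝ))) [IsProbabilityMeasure ν]
    (hindep : iIndepFun (fun i (ω : ℕ → (Fin n → ℝ)) => ω i) ν)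
    (hlaw : ∀ i : ℕ, Measure.map (fun ω : ℕ → (Fin n → ℝ) => ω i) ν = Unif P) :
    (∀ᵐ ω ∂ν, ∃ i : ℕ, QP (x - ω i) + ω i - x ∈ A) ∧
      Measure.map
        (fun ω : ℕ → (Fin n → ℝ) =>
          let H := sInf {i : ℕ | QP (x - ω i) + ω i - x ∈ A}
          QP (x - ω H) + ω H - x) ν
        = Unif A := by
  classical
  set g : (Fin n → ℝ) → (Fin n → ℝ) := fun v => QP (x - v) + v - x with hgdef
  have hgmeas : Measurable g :=
    ((hQmeas.comp (measurable_const.sub measurable_id)).add measurable_id).sub measurable_const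
  have crypto : ∀ S : Set (Fin n → ℝ), MeasurableSet S →
      volume (P ∩ g ⁻¹' S) = volume (P ∩ S) :=
    fun S hS => crypto_aux G hG P hPmeas hpart QP hQmeas hQlat hQcell x S hS
  have hPne : volume P ≠ 0 := hP0.ne'
  have hPnetop : volume P ≠ ⊤ := hPfin.ne
  have hAleP : volume A ≤ volume P := measure_mono hAP
  have hAne : volume A ≠ 0 := hA0.ne'
  have hAnetop : volume A ≠ ⊤ := (lt_of_le_of_lt hAleP hPfin).ne
  set p : ENNReal := (volume P)⁻¹ * volume A with hpdef
  have hple1 : p ≤ 1 := by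
    rw [hpdef]
    calc (volume P)⁻¹ * volume A ≤ (volume P)⁻¹ * volume P := mul_le_mul_right hAleP _
      _ = 1 := ENNReal.inv_mul_cancel hPne hPnetop
  have hpne0 : p ≠ 0 := mul_ne_zero (ENNReal.inv_ne_zero.2 hPnetop) hAne
  have hpnetop : p ≠ ⊤ := (lt_of_le_of_lt hple1 (by norm_num)).ne
  -- coordinate laws
  have hcoord : ∀ (i : ℕ) (C : Set (Fin n → ℝ)), MeasurableSet C →
      ν ((fun ω : ℕ → (Fin n → ℝ) => ω i) ⁻¹' C) = (volume P)⁻¹ * volume (C ∩ P) := by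
    intro i C hC
    rw [← Measure.map_apply (measurable_pi_apply i) hC, hlaw i]
    simp [Unif, Measure.restrict_apply hC]
  set B : Set (Fin n → ℝ) := g ⁻¹' A with hBdef
  have hBmeas : MeasurableSet B := hgmeas hAmeas
  have hBP : volume (B ∩ P) = volume A := by
    rw [Set.inter_comm, hBdef, crypto A hAmeas, Set.inter_eq_self_of_subset_right hAP]
  have hνB : ∀ i, ν ((fun ω : ℕ → (Fin n → ℝ) => ω i) ⁻¹' B) = p := by
    intro i
    rw [hcoord i B hBmeas, hBP, hpdef]
  have hνBc : ∀ i, ν ((fun ω : ℕ → (Fin n → ℝ) => ω i) ⁻¹' Bᶜ) = 1 - p := by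
    intro i
    rw [hcoord i Bᶜ hBmeas.compl]
    have h1 : Bᶜ ∩ P = P \ (B ∩ P) := by
      ext v; simp only [Set.mem_inter_iff, Set.mem_compl_iff, Set.mem_diff]; tauto
    rw [h1, measure_diff Set.inter_subset_right (hBmeas.inter hPmeas).nullMeasurableSet
      (by rw [hBP]; exact hAnetop), hBP,
      ENNReal.mul_sub (fun _ _ => ENNReal.inv_ne_top.2 hPne),
      ENNReal.inv_mul_cancel hPne hPnetop, hpdef]
  set F : ℕ → Set (ℕ → (Fin n → ℝ)) := fun i => (fun ω : ℕ → (Fin n → ℝ) => ω i) ⁻¹' B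
    with hFdef
  have hFmeas : ∀ i, MeasurableSet (F i) := fun i => (measurable_pi_apply i) hBmeas
  set E : ℕ → Set (Fin n → ℝ) → Set (ℕ → (Fin n → ℝ)) :=
    fun k C => (⋂ i ∈ Finset.range k, (F i)ᶜ) ∩ (fun ω : ℕ → (Fin n → ℝ) => ω k) ⁻¹' C
    with hEdef
  have hEmeas : ∀ k (C : Set (Fin n → ℝ)), MeasurableSet C → MeasurableSet (E k C) := by
    intro k C hC
    exact (MeasurableSet.biInter (Finset.range k).countable_toSet
      (fun i _ => (hFmeas i).compl)).inter ((measurable_pi_apply k) hC)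
  -- product formula
  have hEprod : ∀ k (C : Set (Fin n → ℝ)), MeasurableSet C →
      ν (E k C) = (1 - p) ^ k * ((volume P)⁻¹ * volume (C ∩ P)) := by
    intro k C hC
    have h := hindep.measure_inter_preimage_eq_mul (Finset.range (k + 1))
      (sets := fun i => if i < k then Bᶜ else C)
      (fun i _ => by by_cases hik : i < k <;> simp [hik, hBmeas.compl, hC])
    have hLHS : (⋂ i ∈ Finset.range (k + 1),
        (fun ω : ℕ → (Fin n → ℝ) => ω i) ⁻¹' (if i < k then Bᶜ else C)) = E k C := by
      ext ω
      simp only [Set.mem_iInter, Set.mem_preimage, Finset.mem_range, hEdef,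
        Set.mem_inter_iff, hFdef, Set.mem_compl_iff]
      constructor
      · intro h'
        refine ⟨fun i hi => ?_, ?_⟩
        · have := h' i (by omega)
          rwa [if_pos hi] at this
        · have := h' k (by omega)
          rwa [if_neg (lt_irrefl k)] at this
      · rintro ⟨h1, h2⟩ i hi
        by_cases hik : i < k
        · rw [if_pos hik]; exact h1 i hik
        · have hik' : i = k := by omega
          rw [if_neg hik, hik']; exact h2
    have e1 : ∀ i ∈ Finset.range k,
        ν ((fun ω : ℕ → (Fin n → ℝ) => ω i) ⁻¹' (if i < k then Bᶜ else C)) = 1 - p := by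
      intro i hi
      rw [if_pos (Finset.mem_range.1 hi)]
      exact hνBc i
    rw [Finset.prod_range_succ] at h
    beta_reduce at h
    rw [if_neg (lt_irrefl k), Finset.prod_congr rfl e1, Finset.prod_const,
      Finset.card_range, hLHS] at h
    rw [h, hcoord k C hC]
  have hDdisj : ∀ (C : Set (Fin n → ℝ)), C ⊆ B →
      Pairwise (Function.onFun Disjoint fun k => E k C) := by
    intro C hCB
    have key : ∀ k k', k < k' → Disjoint (E k C) (E k' C) := by
      intro k k' hkk'
      rw [Set.disjoint_left]
      intro ω h1 h2
      have hFk : ω ∈ F k := hCB h1.2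
      have h3 := h2.1
      simp only [Set.mem_iInter, Finset.mem_range] at h3
      exact h3 k hkk' hFk
    intro k k' hne
    rcases hne.lt_or_gt with h | h
    · exact key _ _ h
    · exact (key _ _ h).symm
  have hsum : ν (⋃ k, E k B) = 1 := by
    rw [measure_iUnion (hDdisj B subset_rfl) (fun k => hEmeas k B hBmeas)]
    have hval : ∀ k, ν (E k B) = (1 - p) ^ k * p := by
      intro k; rw [hEprod k B hBmeas, hBP, ← hpdef]
    rw [tsum_congr hval, ENNReal.tsum_mul_right, ENNReal.tsum_geometric,
      ENNReal.sub_sub_cancel ENNReal.one_ne_top hple1,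
      ENNReal.inv_mul_cancel hpne0 hpnetop]
  have hcompl : ν ((⋃ k, E k B)ᶜ) = 0 := by
    rw [measure_compl (MeasurableSet.iUnion fun k => hEmeas k B hBmeas) (measure_ne_top ν _),
      hsum, measure_univ, tsub_self]
  -- a.s. part
  have hae : ∀ᵐ ω ∂ν, ∃ i : ℕ, QP (x - ω i) + ω i - x ∈ A := by
    rw [ae_iff]
    refine measure_mono_null ?_ hcompl
    intro ω hω
    simp only [Set.mem_setOf_eq, not_exists] at hω
    simp only [Set.mem_compl_iff, Set.mem_iUnion, not_exists]
    intro k hk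
    exact hω k hk.2
  -- H and Z
  set Hf : (ℕ → (Fin n → ℝ)) → ℕ := fun ω => sInf {i | g (ω i) ∈ A} with hHdef
  have hHk : ∀ k ω, (∀ i < k, ω ∉ F i) → ω ∈ F k → Hf ω = k := by
    intro k ω h1 h2
    have hne : {i | g (ω i) ∈ A}.Nonempty := ⟨k, h2⟩
    refine le_antisymm (Nat.sInf_le h2) ?_
    by_contra h
    push_neg at h
    exact h1 _ h (Nat.sInf_mem hne)
  have hHmeas_k : ∀ k, MeasurableSet {ω : ℕ → (Fin n → ℝ) | Hf ω = k} := by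
    intro k
    have heq : {ω : ℕ → (Fin n → ℝ) | Hf ω = k} =
        ((⋂ i ∈ Finset.range k, (F i)ᶜ) ∩ F k) ∪ (if k = 0 then ⋂ i, (F i)ᶜ else ∅) := by
      ext ω
      simp only [Set.mem_setOf_eq, Set.mem_union, Set.mem_inter_iff, Set.mem_iInter,
        Finset.mem_range, Set.mem_compl_iff]
      by_cases hne : {i | g (ω i) ∈ A}.Nonempty
      · constructor
        · intro hk
          left
          refine ⟨fun i hi hFi => ?_, ?_⟩
          · have hle := Nat.sInf_le (show i ∈ {i | g (ω i) ∈ A} from hFi)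
            have hk' : sInf {i | g (ω i) ∈ A} = k := hk
            omega
          · have := Nat.sInf_mem hne
            rwa [show sInf {i | g (ω i) ∈ A} = k from hk] at this
        · rintro (⟨h1, h2⟩ | h2)
          · exact hHk k ω (fun i hi => h1 i hi) h2
          · exfalso
            obtain ⟨i, hi⟩ := hne
            by_cases hk0 : k = 0
            · rw [if_pos hk0] at h2
              exact (Set.mem_iInter.1 h2 i) hi
            · rw [if_neg hk0] at h2
              exact h2
      · have hempty : {i | g (ω i) ∈ A} = ∅ := Set.not_nonempty_iff_eq_empty.1 hne
        have h0 : Hf ω = 0 := by rw [hHdef]; simp only [hempty]; exact Nat.sInf_empty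
        have hall : ∀ i, ω ∉ F i := fun i hi => hne ⟨i, hi⟩
        constructor
        · intro hk
          right
          rw [if_pos (by omega : k = 0)]
          exact Set.mem_iInter.2 hall
        · rintro (⟨h1, h2⟩ | h2)
          · exact absurd h2 (hall k)
          · by_cases hk0 : k = 0
            · omega
            · rw [if_neg hk0] at h2
              exact absurd h2 (Set.notMem_empty ω)
    rw [heq]
    refine ((MeasurableSet.biInter (Finset.range k).countable_toSet
      (fun i _ => (hFmeas i).compl)).inter (hFmeas k)).union ?_
    by_cases hk0 : k = 0
    · rw [if_pos hk0]; exact MeasurableSet.iInter fun i => (hFmeas i).compl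
    · rw [if_neg hk0]; exact MeasurableSet.empty
  have hevmeas : Measurable (fun ω : ℕ → (Fin n → ℝ) => ω (Hf ω)) := by
    intro C hC
    have heq : (fun ω : ℕ → (Fin n → ℝ) => ω (Hf ω)) ⁻¹' C =
        ⋃ k, ({ω : ℕ → (Fin n → ℝ) | Hf ω = k} ∩ (fun ω : ℕ → (Fin n → ℝ) => ω k) ⁻¹' C) := by
      ext ω
      simp only [Set.mem_preimage, Set.mem_iUnion, Set.mem_inter_iff, Set.mem_setOf_eq]
      constructor
      · intro h; exact ⟨Hf ω, rfl, h⟩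
      · rintro ⟨k, hk, h⟩; rwa [hk]
    rw [heq]
    exact MeasurableSet.iUnion fun k => (hHmeas_k k).inter ((measurable_pi_apply k) hC)
  have hZmeas : Measurable (fun ω : ℕ → (Fin n → ℝ) => g (ω (Hf ω))) := hgmeas.comp hevmeas
  have hmap : Measure.map (fun ω : ℕ → (Fin n → ℝ) => g (ω (Hf ω))) ν = Unif A := by
    refine Measure.ext fun S hS => ?_
    rw [Measure.map_apply hZmeas hS]
    set Zpre := (fun ω : ℕ → (Fin n → ℝ) => g (ω (Hf ω))) ⁻¹' S with hZpdef
    have h1 : ν Zpre = ν (Zpre ∩ ⋃ k, E k B) := by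
      refine le_antisymm ?_ (measure_mono Set.inter_subset_left)
      calc ν Zpre ≤ ν (Zpre ∩ ⋃ k, E k B) + ν (Zpre \ ⋃ k, E k B) :=
            measure_le_inter_add_diff ν _ _
        _ ≤ ν (Zpre ∩ ⋃ k, E k B) + ν ((⋃ k, E k B)ᶜ) := by
            gcongr
            exact Set.diff_subset_compl _ _
        _ = ν (Zpre ∩ ⋃ k, E k B) := by rw [hcompl, add_zero]
    have h2 : Zpre ∩ (⋃ k, E k B) = ⋃ k, E k (B ∩ g ⁻¹' S) := by
      ext ω
      simp only [hZpdef, Set.mem_inter_iff, Set.mem_iUnion, Set.mem_preimage, hEdef]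
      constructor
      · rintro ⟨hZ, k, hk1, hk2⟩
        have hH : Hf ω = k := by
          refine hHk k ω (fun i hi hFi => ?_) hk2
          have := Set.mem_iInter.1 hk1 i
          simp only [Set.mem_iInter, Finset.mem_range] at this
          exact this hi hFi
        refine ⟨k, hk1, hk2, ?_⟩
        rwa [hH] at hZ
      · rintro ⟨k, hk1, hkB, hkS⟩
        have hH : Hf ω = k := by
          refine hHk k ω (fun i hi hFi => ?_) hkB
          have := Set.mem_iInter.1 hk1 i
          simp only [Set.mem_iInter, Finset.mem_range] at this
          exact this hi hFi
        exact ⟨by rw [hH]; exact hkS, k, hk1, hkB⟩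
    have hdisj' : Pairwise (Function.onFun Disjoint fun k => E k (B ∩ g ⁻¹' S)) :=
      hDdisj _ Set.inter_subset_left
    rw [h1, h2, measure_iUnion hdisj' (fun k => hEmeas k _ (hBmeas.inter (hgmeas hS)))]
    have hval : ∀ k, ν (E k (B ∩ g ⁻¹' S)) =
        (1 - p) ^ k * ((volume P)⁻¹ * volume (S ∩ A)) := by
      intro k
      rw [hEprod k _ (hBmeas.inter (hgmeas hS))]
      have he : (B ∩ g ⁻¹' S) ∩ P = P ∩ g ⁻¹' (A ∩ S) := by
        rw [hBdef, ← Set.preimage_inter, Set.inter_comm]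
      rw [he, crypto (A ∩ S) (hAmeas.inter hS),
        Set.inter_eq_self_of_subset_right (Set.inter_subset_left.trans hAP),
        Set.inter_comm A S]
    rw [tsum_congr hval, ENNReal.tsum_mul_right, ENNReal.tsum_geometric,
      ENNReal.sub_sub_cancel ENNReal.one_ne_top hple1]
    rw [show (Unif A) S = (volume A)⁻¹ * volume (S ∩ A) by
      simp [Unif, Measure.restrict_apply hS]]
    rw [← mul_assoc]
    congr 1
    rw [hpdef, ENNReal.mul_inv (Or.inl (ENNReal.inv_ne_zero.2 hPnetop))
      (Or.inl (ENNReal.inv_ne_top.2 hPne)), inv_inv, mul_comm (volume P) (volume A)⁻¹,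
      mul_assoc, ENNReal.mul_inv_cancel hPne hPnetop, mul_one]
  exact ⟨hae, hmap⟩
end

section
/- Let n ≥ 1, let G be a nonsingular real n×n matrix, let P ⊆ ℝⁿ be a basic cell of the lattice Gℤⁿ with lattice quantizer Q_P, and let A ⊆ P be measurable with vol(A) > 0. Fix x ∈ ℝⁿ. Let V₁, V₂, … be i.i.d. with law Unif(P), and let H be the least index i such that Q_P(x − V_i) + V_i − x ∈ A. Then H is geometrically distributed with success probability p = vol(A)/vol(P): for every integer k ≥ 1, P(H = k) = (1 − vol(A)/vol(P))^{k−1} · vol(A)/vol(P). In particular the acceptance probability of a single trial is vol(A)/vol(P). -/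
/-! The map `y ↦ Q(x - y) + y - x` is invariant under lattice translations, so the volume of the
part of the cell `P` that it sends into `A` is the same for every basic cell. On the cell `x + P`
the quantizer vanishes and the map is translation by `-x`, so that volume is `vol A`. Each trial
therefore succeeds with probability `p = vol A / vol P`, and by independence the first success
occurs at trial `k` with probability `(1 - p) ^ (k - 1) * p`. -/

open MeasureTheory ProbabilityTheory

open Pointwise

theorem Nat.sInf_eq_iff_of_ne_zero {s : Set ℕ} {k : ℕ} (hk : k ≠ 0) :
    sInf s = k ↔ k ∈ s ∧ ∀ i < k, i ∉ s := by
  constructor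
  · rintro rfl
    have hs : s.Nonempty := Nat.nonempty_of_pos_sInf (Nat.pos_of_ne_zero hk)
    exact ⟨Nat.sInf_mem hs, fun i => Nat.notMem_of_lt_sInf⟩
  · rintro ⟨hks, hlt⟩
    exact IsLeast.csInf_eq ⟨hks, fun i his => not_lt.1 fun h => hlt i h his⟩

theorem ProbabilityTheory.iIndepFun.measure_sInf_mem_eq_geometric {Ω β : Type*}
    [MeasurableSpace Ω] [MeasurableSpace β] {μ : Measure Ω} [IsProbabilityMeasure μ]
    {X : ℕ → Ω → β} (hX : iIndepFun X μ) (hXm : ∀ i, Measurable (X i)) {B : Set β}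
    (hB : MeasurableSet B) {p : ENNReal} (hp : ∀ i, μ (X i ⁻¹' B) = p) {k : ℕ} (hk : 1 ≤ k) :
    μ {ω | sInf {i | 1 ≤ i ∧ X i ω ∈ B} = k} = (1 - p) ^ (k - 1) * p := by
  obtain ⟨m, rfl⟩ : ∃ m, k = m + 1 := ⟨k - 1, by omega⟩
  have hevent : {ω | sInf {i | 1 ≤ i ∧ X i ω ∈ B} = m + 1}
      = ⋂ i ∈ Finset.Ioc 0 (m + 1), X i ⁻¹' (if i ≤ m then Bᶜ else B) := by
    ext ω
    simp only [Set.mem_ofPred_eq, Nat.sInf_eq_iff_of_ne_zero m.succ_ne_zero, Set.mem_iInter,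
      Finset.mem_Ioc, Set.mem_preimage]
    constructor
    · rintro ⟨⟨-, hm⟩, hlt⟩ i ⟨hi0, him⟩
      split_ifs with hi
      · exact fun hiB => hlt i (by omega) ⟨hi0, hiB⟩
      · rwa [show i = m + 1 by omega]
    · intro h
      refine ⟨⟨by omega, by simpa using h (m + 1) ⟨by omega, le_rfl⟩⟩, ?_⟩
      rintro i hi ⟨hi1, hiB⟩
      simpa [show i ≤ m by omega, hiB] using h i ⟨hi1, by omega⟩
  have hcompl : ∀ i, μ (X i ⁻¹' Bᶜ) = 1 - p := fun i => by
    rw [Set.preimage_compl, prob_compl_eq_one_sub (hXm i hB), hp]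
  rw [hevent, hX.measure_inter_preimage_eq_mul _ (fun i _ => by split_ifs <;> simp [hB]),
    Finset.prod_Ioc_succ_top (Nat.zero_le m), if_neg m.lt_succ_self.not_ge, hp,
    Finset.prod_congr rfl fun i hi => by rw [if_pos (Finset.mem_Ioc.1 hi).2, hcompl],
    Finset.prod_const, Nat.card_Ioc, Nat.add_sub_cancel, Nat.sub_zero]

section BasicCell

variable {E : Type*} [AddCommGroup E]

def IsBasicCell (Λ : AddSubgroup E) (P : Set E) : Prop :=
  ∀ w : E, ∃! ℓ : Λ, w - ℓ ∈ P

/-- `Q y` is the lattice point `ℓ` with `y ∈ -P + ℓ`. -/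
def IsLatticeQuantizer (Λ : AddSubgroup E) (P : Set E) (Q : E → E) : Prop :=
  ∀ y : E, Q y ∈ Λ ∧ Q y - y ∈ P

variable {Λ : AddSubgroup E} {P : Set E}

namespace IsBasicCell

theorem eq_of_sub_mem (hP : IsBasicCell Λ P) {w ℓ ℓ' : E} (hℓ : ℓ ∈ Λ) (hℓ' : ℓ' ∈ Λ)
    (h : w - ℓ ∈ P) (h' : w - ℓ' ∈ P) : ℓ = ℓ' :=
  congrArg Subtype.val ((hP w).unique (y₁ := ⟨ℓ, hℓ⟩) (y₂ := ⟨ℓ', hℓ'⟩) h h')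

theorem vadd (hP : IsBasicCell Λ P) (x : E) : IsBasicCell Λ (x +ᵥ P) := by
  intro w
  simpa only [Set.mem_vadd_set_iff_neg_vadd_mem, vadd_eq_add, neg_add_eq_sub, sub_right_comm]
    using hP (w - x)

theorem isAddFundamentalDomain [MeasurableSpace E] {μ : Measure E} (hP : IsBasicCell Λ P)
    (hPm : NullMeasurableSet P μ) : IsAddFundamentalDomain Λ P μ := by
  refine .mk' hPm fun w => ?_
  obtain ⟨ℓ, hℓ, huniq⟩ := hP w
  refine ⟨-ℓ, ?_, fun g hg => neg_eq_iff_eq_neg.1 (huniq (-g) ?_)⟩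
  · simpa [AddSubgroup.vadd_def, neg_add_eq_sub] using hℓ
  · simpa [AddSubgroup.vadd_def, neg_add_eq_sub, add_comm] using hg

end IsBasicCell

theorem measurable_apply_sub_add_sub [MeasurableSpace E] [MeasurableAdd₂ E] [MeasurableSub₂ E]
    {Q : E → E} (hQm : Measurable Q) (x : E) : Measurable fun y => Q (x - y) + y - x :=
  ((hQm.comp (measurable_const.sub measurable_id)).add measurable_id).sub measurable_const

namespace IsLatticeQuantizer

variable {Q : E → E}

theorem eq_of_sub_mem (hQ : IsLatticeQuantizer Λ P Q) (hP : IsBasicCell Λ P) {y ℓ : E}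
    (hℓ : ℓ ∈ Λ) (h : ℓ - y ∈ P) : Q y = ℓ := by
  refine hP.eq_of_sub_mem (w := -y) (neg_mem (hQ y).1) (neg_mem hℓ) ?_ ?_ |> neg_inj.1
  · rw [neg_sub_neg]; exact (hQ y).2
  · rwa [neg_sub_neg]

theorem apply_sub (hQ : IsLatticeQuantizer Λ P Q) (hP : IsBasicCell Λ P) (y : E) {ℓ : E}
    (hℓ : ℓ ∈ Λ) : Q (y - ℓ) = Q y - ℓ :=
  hQ.eq_of_sub_mem hP (sub_mem (hQ y).1 hℓ) (by simpa using (hQ y).2)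

theorem apply_sub_eq_zero (hQ : IsLatticeQuantizer Λ P Q) (hP : IsBasicCell Λ P) {x y : E}
    (hy : y ∈ x +ᵥ P) : Q (x - y) = 0 :=
  hQ.eq_of_sub_mem hP (zero_mem Λ) (by
    simpa [Set.mem_vadd_set_iff_neg_vadd_mem, neg_add_eq_sub] using hy)

theorem measure_setOf_quantizer_mem_inter [MeasurableSpace E] [MeasurableAdd₂ E]
    [MeasurableSub₂ E] [Countable Λ] {μ : Measure E} [μ.IsAddLeftInvariant]
    (hQ : IsLatticeQuantizer Λ P Q) (hP : IsBasicCell Λ P) (hPm : MeasurableSet P)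
    (hQm : Measurable Q) {A : Set E} (hAm : MeasurableSet A) (hAP : A ⊆ P) (x : E) :
    μ ({y | Q (x - y) + y - x ∈ A} ∩ P) = μ A := by
  set B := {y | Q (x - y) + y - x ∈ A}
  have hBm : MeasurableSet B := measurable_apply_sub_add_sub hQm x hAm
  have hBinv : ∀ g : Λ, (g +ᵥ ·) ⁻¹' B = B := by
    rintro ⟨ℓ, hℓ⟩
    ext y
    simp only [B, Set.mem_preimage, Set.mem_ofPred_eq, AddSubgroup.vadd_def, vadd_eq_add,
      show x - (ℓ + y) = x - y - ℓ by abel, hQ.apply_sub hP _ hℓ]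
    abel_nf
  have hBx : B ∩ (x +ᵥ P) = x +ᵥ A := by
    ext y
    simp only [B, Set.mem_inter_iff, Set.mem_ofPred_eq]
    constructor
    · rintro ⟨hyA, hyP⟩
      rw [hQ.apply_sub_eq_zero hP hyP, zero_add] at hyA
      rwa [Set.mem_vadd_set_iff_neg_vadd_mem, vadd_eq_add, neg_add_eq_sub]
    · intro hy
      have hyP : y ∈ x +ᵥ P := Set.vadd_set_mono hAP hy
      rw [hQ.apply_sub_eq_zero hP hyP, zero_add]
      rw [Set.mem_vadd_set_iff_neg_vadd_mem, vadd_eq_add, neg_add_eq_sub] at hy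
      exact ⟨hy, hyP⟩
  calc μ (B ∩ P) = μ (B ∩ (x +ᵥ P)) :=
        (hP.isAddFundamentalDomain hPm.nullMeasurableSet).measure_set_eq
          ((hP.vadd x).isAddFundamentalDomain (hPm.const_vadd x).nullMeasurableSet) hBm hBinv
    _ = μ A := by rw [hBx, measure_vadd]

end IsLatticeQuantizer

end BasicCell

theorem unif_apply {n : ℕ} (A : Set (Fin n → ℝ)) {s : Set (Fin n → ℝ)} (hs : MeasurableSet s) :
    Unif A s = volume (s ∩ A) / volume A := by
  rw [Unif, Measure.smul_apply, Measure.restrict_apply hs, smul_eq_mul, ENNReal.div_eq_inv_mul]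

namespace Matrix

variable {m n : Type*} [Fintype n]

def intLattice (G : Matrix m n ℝ) : AddSubgroup (m → ℝ) :=
  (G.mulVecLin.toAddMonoidHom.comp (AddMonoidHom.compLeft (Int.castAddHom ℝ) n)).range

theorem mem_intLattice {G : Matrix m n ℝ} {v : m → ℝ} :
    v ∈ G.intLattice ↔ ∃ j : n → ℤ, G *ᵥ (fun i => (j i : ℝ)) = v :=
  Iff.rfl

instance (G : Matrix m n ℝ) : Countable G.intLattice :=
  (Set.countable_range _).to_subtype

theorem isBasicCell_intLattice {G : Matrix m n ℝ} {P : Set (m → ℝ)}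
    (hP : ∀ x : m → ℝ, ∃! j : n → ℤ, x - G *ᵥ (fun i => (j i : ℝ)) ∈ P) :
    IsBasicCell G.intLattice P := by
  intro x
  obtain ⟨j, hj, huniq⟩ := hP x
  refine ⟨⟨_, j, rfl⟩, hj, ?_⟩
  rintro ⟨_, j', rfl⟩ hj'
  rw [huniq j' hj']

end Matrix

/-- The dithers are `ω 1, ω 2, …`; the coordinate `ω 0` plays no role. -/
theorem rsuq_trials_geometric_general {n : ℕ}
    (G : Matrix (Fin n) (Fin n) ℝ)
    (P : Set (Fin n → ℝ)) (hPmeas : MeasurableSet P)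
    (hpart : ∀ x : Fin n → ℝ, ∃! j : Fin n → ℤ,
      x - G.mulVec (fun i => (j i : ℝ)) ∈ P)
    (QP : (Fin n → ℝ) → (Fin n → ℝ)) (hQmeas : Measurable QP)
    (hQlat : ∀ y : Fin n → ℝ, ∃ j : Fin n → ℤ, QP y = G.mulVec (fun i => (j i : ℝ)))
    (hQcell : ∀ y : Fin n → ℝ, QP y - y ∈ P)
    (A : Set (Fin n → ℝ)) (hAmeas : MeasurableSet A) (hAP : A ⊆ P)
    (x : Fin n → ℝ)
    (ν : Measure (ℕ → (Fin n → ℝ))) [IsProbabilityMeasure ν]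
    (hindep : iIndepFun (fun i (ω : ℕ → (Fin n → ℝ)) => ω i) ν)
    (hlaw : ∀ i : ℕ, Measure.map (fun ω : ℕ → (Fin n → ℝ) => ω i) ν = Unif P)
    (k : ℕ) (hk : 1 ≤ k) :
    ν {ω : ℕ → (Fin n → ℝ) |
        sInf {i : ℕ | 1 ≤ i ∧ QP (x - ω i) + ω i - x ∈ A} = k}
      = (1 - volume A / volume P) ^ (k - 1) * (volume A / volume P) := by
  have hcell : IsBasicCell G.intLattice P := G.isBasicCell_intLattice hpart
  have hQ : IsLatticeQuantizer G.intLattice P QP := fun y =>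
    ⟨Matrix.mem_intLattice.2 ((hQlat y).imp fun _ => Eq.symm), hQcell y⟩
  have hBmeas : MeasurableSet {y | QP (x - y) + y - x ∈ A} :=
    measurable_apply_sub_add_sub hQmeas x hAmeas
  refine hindep.measure_sInf_mem_eq_geometric measurable_pi_apply hBmeas (fun i => ?_) hk
  rw [← Measure.map_apply (measurable_pi_apply i) hBmeas, hlaw i, unif_apply P hBmeas,
    hQ.measure_setOf_quantizer_mem_inter hcell hPmeas hQmeas hAmeas hAP x]

/-- **The number of trials of the RSUQ is geometric with success probability
`vol(A)/vol(P)`.** Let `P` be a basic cell of the lattice `Gℤⁿ` with lattice quantizer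
`Q_P`, and let `A ⊆ P` be measurable with positive volume. Fix an input `x`. Let
`V₁, V₂, …` be i.i.d. dithers with law `Unif P` (formalized as: a probability measure
`ν` on `ℕ → ℝⁿ` whose coordinates are independent, each with law `Unif P`; only the
coordinates with index `≥ 1` are used), and let `H` be the least index `i ≥ 1` with
`Q_P(x − V_i) + V_i − x ∈ A`. Then for every integer `k ≥ 1`,
`ν {H = k} = (1 − vol(A)/vol(P))^(k−1) · vol(A)/vol(P)`. -/
theorem rsuq_trials_geometric {n : ℕ} (hn : 1 ≤ n)
    (G : Matrix (Fin n) (Fin n) ℝ) (hG : IsUnit G.det)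
    (P : Set (Fin n → ℝ)) (hPmeas : MeasurableSet P) (hPbdd : Bornology.IsBounded P)
    (hP0 : 0 < volume P) (hPfin : volume P < ⊤)
    (hpart : ∀ x : Fin n → ℝ, ∃! j : Fin n → ℤ,
      x - G.mulVec (fun i => (j i : ℝ)) ∈ P)
    (QP : (Fin n → ℝ) → (Fin n → ℝ)) (hQmeas : Measurable QP)
    (hQlat : ∀ y : Fin n → ℝ, ∃ j : Fin n → ℤ, QP y = G.mulVec (fun i => (j i : ℝ)))
    (hQcell : ∀ y : Fin n → ℝ, QP y - y ∈ P)
    (A : Set (Fin n → ℝ)) (hAmeas : MeasurableSet A) (hAP : A ⊆ P) (hA0 : 0 < volume A)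
    (x : Fin n → ℝ)
    (ν : Measure (ℕ → (Fin n → ℝ))) [IsProbabilityMeasure ν]
    (hindep : iIndepFun (fun i (ω : ℕ → (Fin n → ℝ)) => ω i) ν)
    (hlaw : ∀ i : ℕ, Measure.map (fun ω : ℕ → (Fin n → ℝ) => ω i) ν = Unif P)
    (k : ℕ) (hk : 1 ≤ k) :
    ν {ω : ℕ → (Fin n → ℝ) |
        sInf {i : ℕ | 1 ≤ i ∧ QP (x - ω i) + ω i - x ∈ A} = k}
      = (1 - volume A / volume P) ^ (k - 1) * (volume A / volume P) :=
  rsuq_trials_geometric_general G P hPmeas hpart QP hQmeas hQlat hQcell A hAmeas hAP x ν hindep hlaw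
    k hk
end

section
/- Let n ≥ 1 and σ > 0. For every z ∈ ℝⁿ (with Euclidean norm ‖·‖), ∫₀^∞ [u^{n/2} e^{−u/2} / (2^{(n+2)/2} Γ(n/2 + 1))] · [1/((σ√u)ⁿ · vol(Bⁿ))] · 1{‖z‖ ≤ σ√u} du = (2πσ²)^{−n/2} exp(−‖z‖²/(2σ²)), where vol(Bⁿ) = π^{n/2}/Γ(n/2 + 1) is the Lebesgue volume of the unit Euclidean ball Bⁿ in ℝⁿ. Equivalently: if U ~ χ²_{n+2} (the chi-squared distribution with n+2 degrees of freedom, whose density is u^{n/2} e^{−u/2}/(2^{(n+2)/2} Γ(n/2+1)) on u > 0) and, conditionally on U = u, Z is uniform on the ball σ√u · Bⁿ, then Z ~ N(0, σ² Iₙ), the centered Gaussian on ℝⁿ with covariance σ²Iₙ. -/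
open MeasureTheory Real


lemma exp_half_integral (a : ℝ) :
    ∫ u in Set.Ioi a, Real.exp (-u/2) = 2 * Real.exp (-a/2) := by
  have hderiv : ∀ x ∈ Set.Ici a, HasDerivAt (fun u => -2 * Real.exp (-u/2))
      (Real.exp (-x/2)) x := by
    intro x hx
    have h1 : HasDerivAt (fun u : ℝ => -u/2) (-1/2) x := by
      simpa using ((hasDerivAt_id x).neg.div_const 2)
    have h2 := (Real.hasDerivAt_exp (-x/2)).comp x h1
    have := h2.const_mul (-2 : ℝ)
    exact this.congr_deriv (by ring)
  have hInt : IntegrableOn (fun u => Real.exp (-u/2)) (Set.Ioi a) := by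
    have := exp_neg_integrableOn_Ioi a (b := 1/2) (by norm_num)
    apply this.congr_fun _ measurableSet_Ioi
    intro x _; ring_nf
  have htend : Filter.Tendsto (fun u => -2 * Real.exp (-u/2)) Filter.atTop (nhds 0) := by
    have h0 : Filter.Tendsto (fun u : ℝ => -u/2) Filter.atTop Filter.atBot := by
      apply Filter.tendsto_atBot_mono (fun u => le_refl (-u/2))
      exact (Filter.tendsto_neg_atBot_iff.mpr Filter.tendsto_id).atBot_div_const (by norm_num)
    have := (Real.tendsto_exp_atBot.comp h0).const_mul (-2 : ℝ)
    simpa using this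
  have := integral_Ioi_of_hasDerivAt_of_tendsto' hderiv hInt htend
  rw [this]; ring


/-- **Gaussian as a chi-squared mixture of uniform distributions on balls.**
Let `n ≥ 1` and `σ > 0`. For every `z ∈ ℝⁿ` (Euclidean norm),
`∫₀^∞ [u^{n/2} e^{−u/2} / (2^{(n+2)/2} Γ(n/2+1))] · [1/((σ√u)ⁿ vol(Bⁿ))] ·
1{‖z‖ ≤ σ√u} du = (2πσ²)^{−n/2} exp(−‖z‖²/(2σ²))`,
where `vol(Bⁿ) = π^{n/2}/Γ(n/2+1)` is the volume of the unit Euclidean ball.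
Equivalently: if `U ~ χ²_{n+2}` and, conditionally on `U = u`, `Z` is uniform on the
ball `σ√u·Bⁿ`, then `Z ~ N(0, σ²Iₙ)`. -/
theorem gaussian_chiSq_uniform_mixture (n : ℕ) (hn : 1 ≤ n) (σ : ℝ) (hσ : 0 < σ)
    (z : EuclideanSpace ℝ (Fin n)) :
    ∫ u in Set.Ioi (0 : ℝ),
        (u ^ ((n : ℝ) / 2) * Real.exp (-u / 2)
            / ((2 : ℝ) ^ (((n : ℝ) + 2) / 2) * Real.Gamma ((n : ℝ) / 2 + 1)))
          * (1 / ((σ * Real.sqrt u) ^ n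
              * (Real.pi ^ ((n : ℝ) / 2) / Real.Gamma ((n : ℝ) / 2 + 1))))
          * (if ‖z‖ ≤ σ * Real.sqrt u then 1 else 0)
      = (2 * Real.pi * σ ^ 2) ^ (-(n : ℝ) / 2)
          * Real.exp (-‖z‖ ^ 2 / (2 * σ ^ 2)) := by
  have hΓ : 0 < Real.Gamma ((n : ℝ) / 2 + 1) := Real.Gamma_pos_of_pos (by positivity)
  have hπ : 0 < Real.pi ^ ((n : ℝ) / 2) := Real.rpow_pos_of_pos Real.pi_pos _
  have h2 : (0 : ℝ) < (2 : ℝ) ^ (((n : ℝ) + 2) / 2) := Real.rpow_pos_of_pos two_pos _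
  set a : ℝ := (‖z‖ / σ) ^ 2 with ha
  have ha0 : 0 ≤ a := by positivity
  set C : ℝ := 1 / ((2 : ℝ) ^ (((n : ℝ) + 2) / 2) * σ ^ n * Real.pi ^ ((n : ℝ) / 2)) with hC
  have hstep : ∀ u ∈ Set.Ioi (0 : ℝ),
      (u ^ ((n : ℝ) / 2) * Real.exp (-u / 2)
            / ((2 : ℝ) ^ (((n : ℝ) + 2) / 2) * Real.Gamma ((n : ℝ) / 2 + 1)))
          * (1 / ((σ * Real.sqrt u) ^ n
              * (Real.pi ^ ((n : ℝ) / 2) / Real.Gamma ((n : ℝ) / 2 + 1))))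
          * (if ‖z‖ ≤ σ * Real.sqrt u then 1 else 0)
        = (Set.Ici a).indicator (fun u => C * Real.exp (-u / 2)) u := by
    intro u hu
    have hu0 : 0 < u := hu
    have hsq : (Real.sqrt u) ^ n = u ^ ((n : ℝ) / 2) := by
      rw [Real.sqrt_eq_rpow, ← Real.rpow_natCast (u ^ ((1 : ℝ) / 2)) n,
        ← Real.rpow_mul hu0.le]
      congr 1
      ring
    have hup : 0 < u ^ ((n : ℝ) / 2) := Real.rpow_pos_of_pos hu0 _
    have hcond : (‖z‖ ≤ σ * Real.sqrt u) ↔ a ≤ u := by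
      rw [mul_comm, ← div_le_iff₀ hσ, show a = (‖z‖ / σ) ^ 2 from ha]
      exact Real.le_sqrt (by positivity) hu0.le
    rw [Set.indicator_apply]
    simp only [Set.mem_Ici]
    by_cases hle : a ≤ u
    · rw [if_pos hle, if_pos (hcond.mpr hle), hC, mul_pow, hsq]
      field_simp
    · rw [if_neg hle, if_neg (fun h => hle (hcond.mp h))]
      ring
  rw [setIntegral_congr_fun measurableSet_Ioi hstep,
    setIntegral_indicator measurableSet_Ici]
  have hset : (Set.Ioi (0:ℝ) ∩ Set.Ici a : Set ℝ) =ᵐ[volume] (Set.Ioi a : Set ℝ) := by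
    have h1 : (Set.Ici a : Set ℝ) =ᵐ[volume] (Set.Ioi a : Set ℝ) := (Ioi_ae_eq_Ici (a := a)).symm
    exact (Filter.EventuallyEq.inter (Filter.EventuallyEq.refl _ _) h1).trans
      (Filter.EventuallyEq.of_eq (by rw [Set.Ioi_inter_Ioi, max_eq_right ha0]))
  rw [setIntegral_congr_set hset, integral_const_mul, exp_half_integral]
  have hexp : -a / 2 = -‖z‖ ^ 2 / (2 * σ ^ 2) := by
    rw [ha, div_pow]
    simp only [neg_div]
    rw [div_div, mul_comm (σ ^ 2) 2]
  rw [hexp]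
  have hrpow : (2 * Real.pi * σ ^ 2) ^ (-(n : ℝ) / 2)
      = ((2 : ℝ) ^ (-(n : ℝ) / 2)) * (Real.pi ^ (-(n : ℝ) / 2)) * ((σ ^ n : ℝ))⁻¹ := by
    rw [Real.mul_rpow (by positivity) (by positivity),
      Real.mul_rpow (by norm_num) Real.pi_pos.le]
    congr 1
    rw [← Real.rpow_natCast σ 2, ← Real.rpow_mul hσ.le, ← Real.rpow_natCast σ n,
      ← Real.rpow_neg hσ.le]
    congr 1
    ring
  rw [hrpow, hC]
  have h2' : (2 : ℝ) ^ (((n : ℝ) + 2) / 2) = (2 : ℝ) ^ ((n : ℝ) / 2) * 2 := by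
    rw [show ((n : ℝ) + 2) / 2 = (n : ℝ) / 2 + 1 by ring, Real.rpow_add two_pos,
      Real.rpow_one]
  have hneg2 : (2 : ℝ) ^ (-(n : ℝ) / 2) = ((2 : ℝ) ^ ((n : ℝ) / 2))⁻¹ := by
    rw [show -(n : ℝ) / 2 = -((n : ℝ) / 2) by ring, Real.rpow_neg two_pos.le]
  have hnegπ : Real.pi ^ (-(n : ℝ) / 2) = (Real.pi ^ ((n : ℝ) / 2))⁻¹ := by
    rw [show -(n : ℝ) / 2 = -((n : ℝ) / 2) by ring, Real.rpow_neg Real.pi_pos.le]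
  rw [h2', hneg2, hnegπ]
  have h2p : (0 : ℝ) < (2 : ℝ) ^ ((n : ℝ) / 2) := Real.rpow_pos_of_pos two_pos _
  have hσn : (0 : ℝ) < σ ^ n := by positivity
  field_simp
end

section
/- Let n ≥ 1, Δ > 0, ε ∈ (0,1), δ ∈ (0,1), and let σ̃ > 0 satisfy σ̃² ≥ 2Δ² log(1.25/δ)/ε². Then for all m, m' ∈ ℝⁿ with ‖m − m'‖ ≤ Δ (Euclidean norm) and all measurable S ⊆ ℝⁿ, N(m, σ̃²Iₙ)(S) ≤ e^ε N(m', σ̃²Iₙ)(S) + δ, where N(m, σ̃²Iₙ) denotes the product over n coordinates of one-dimensional Gaussian measures with means m_i and common variance σ̃². (The classical Gaussian mechanism with this noise scale is (ε, δ)-differentially private for queries of global ℓ₂-sensitivity Δ.) -/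
open MeasureTheory ProbabilityTheory

/-- The isotropic Gaussian measure `N(m, σ̃²Iₙ)` on `ℝⁿ`: the product over the `n`
coordinates of one-dimensional Gaussian measures with means `m i` and common
variance `σ̃²`. -/
noncomputable def gaussPi (n : ℕ) (m : Fin n → ℝ) (σ : ℝ) : Measure (Fin n → ℝ) :=
  Measure.pi fun i => gaussianReal (m i) (σ ^ 2).toNNReal

open Real
open scoped NNReal ENNReal

set_option maxHeartbeats 1000000


section infra

variable {n : ℕ} {σ : ℝ}

lemma gp_pi_map (μ ν : Fin n → Measure ℝ) [∀ i, SigmaFinite (μ i)] [∀ i, SigmaFinite (ν i)]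
    (f : Fin n → ℝ → ℝ) (hf : ∀ i, Measurable (f i)) (h : ∀ i, (μ i).map (f i) = ν i) :
    (Measure.pi μ).map (fun x i => f i (x i)) = Measure.pi ν := by
  symm
  apply Measure.pi_eq
  intro s hs
  have hF : Measurable (fun x : Fin n → ℝ => fun i => f i (x i)) :=
    measurable_pi_lambda _ fun i => (hf i).comp (measurable_pi_apply i)
  rw [Measure.map_apply hF (MeasurableSet.univ_pi hs)]
  have hpre : (fun x i => f i (x i)) ⁻¹' Set.pi Set.univ s
      = Set.pi Set.univ (fun i => f i ⁻¹' s i) := by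
    ext x; simp [Set.mem_pi]
  rw [hpre, Measure.pi_pi]
  exact Finset.prod_congr rfl fun i _ => by rw [← h i, Measure.map_apply (hf i) (hs i)]

lemma gp_refl_1d (μ : ℝ) (v : ℝ≥0) :
    (gaussianReal μ v).map (fun x => 2 * μ - x) = gaussianReal μ v := by
  have h1 := gaussianReal_map_const_mul (μ := μ) (v := v) (-1)
  have hv : (NNReal.mk ((-1:ℝ)^2) (sq_nonneg _) * v : ℝ≥0) = v := by
    ext; simp
  rw [hv] at h1
  have h2 : ((gaussianReal μ v).map (fun x => (-1) * x)).map (fun x => 2*μ + x)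
      = (gaussianReal μ v).map (fun x => 2 * μ - x) := by
    rw [Measure.map_map (measurable_const_add _) (measurable_const_mul _)]
    congr 1; funext x; simp [Function.comp]; ring
  rw [← h2, h1, gaussianReal_map_const_add]
  congr 1
  ring

end infra

section density

variable {n : ℕ} {σ : ℝ}

lemma gp_density (m : Fin n → ℝ) (hσ : 0 < σ) :
    gaussPi n m σ = (volume : Measure (Fin n → ℝ)).withDensity
      (fun x => ENNReal.ofReal (∏ i, gaussianPDFReal (m i) (σ ^ 2).toNNReal (x i))) := by
  have hv : ((σ ^ 2).toNNReal : ℝ≥0) ≠ 0 := by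
    rw [ne_eq, Real.toNNReal_eq_zero, not_le]
    positivity
  unfold gaussPi
  apply Measure.pi_eq
  intro s hs
  rw [withDensity_apply _ (MeasurableSet.univ_pi hs)]
  have key : ∀ x : Fin n → ℝ, (Set.univ.pi s).indicator
      (fun x => ENNReal.ofReal (∏ i, gaussianPDFReal (m i) (σ ^ 2).toNNReal (x i))) x
      = ENNReal.ofReal (∏ i, (s i).indicator (gaussianPDFReal (m i) (σ ^ 2).toNNReal) (x i)) := by
    intro x
    by_cases hx : x ∈ Set.univ.pi s
    · rw [Set.indicator_of_mem hx]
      congr 1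
      refine Finset.prod_congr rfl fun i _ => ?_
      rw [Set.indicator_of_mem (hx i (Set.mem_univ i))]
    · rw [Set.indicator_of_notMem hx]
      rw [Set.mem_univ_pi] at hx
      push_neg at hx
      obtain ⟨j, hj⟩ := hx
      rw [Finset.prod_eq_zero (Finset.mem_univ j) (Set.indicator_of_notMem hj _)]
      simp
  rw [← lintegral_indicator (MeasurableSet.univ_pi hs)]
  simp_rw [key]
  rw [volume_pi]
  have hint : ∀ i, Integrable ((s i).indicator (gaussianPDFReal (m i) (σ ^ 2).toNNReal)) :=
    fun i => (integrable_gaussianPDFReal _ _).indicator (hs i)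
  have hnn : ∀ i, (0:ℝ) ≤ ∫ x, (s i).indicator (gaussianPDFReal (m i) (σ ^ 2).toNNReal) x :=
    fun i => integral_nonneg fun x =>
      Set.indicator_nonneg (fun y _ => gaussianPDFReal_nonneg _ _ _) _
  rw [← ofReal_integral_eq_lintegral_ofReal (Integrable.fintype_prod hint)
      (ae_of_all _ fun x => Finset.prod_nonneg fun i _ =>
        Set.indicator_nonneg (fun y _ => gaussianPDFReal_nonneg _ _ _) _)]
  rw [integral_fintype_prod_eq_prod (fun i => (s i).indicator
      (gaussianPDFReal (m i) (σ ^ 2).toNNReal))]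
  rw [ENNReal.ofReal_prod_of_nonneg fun i _ => hnn i]
  refine Finset.prod_congr rfl fun i _ => ?_
  rw [integral_indicator (hs i), gaussianReal_apply_eq_integral _ hv (s i)]

end density

section pointwise

variable {n : ℕ} {σ : ℝ}

lemma gp_prod_pdf_ratio (hσ : 0 < σ) (m w x : Fin n → ℝ) :
    ∏ i, gaussianPDFReal (w i) (σ ^ 2).toNNReal (x i)
      = Real.exp ((∑ i, ((x i - m i) ^ 2 - (x i - w i) ^ 2)) / (2 * σ ^ 2))
        * ∏ i, gaussianPDFReal (m i) (σ ^ 2).toNNReal (x i) := by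
  have hvc : ((σ ^ 2).toNNReal : ℝ) = σ ^ 2 := Real.coe_toNNReal _ (sq_nonneg σ)
  have hσ2 : (0:ℝ) < σ ^ 2 := by positivity
  simp only [gaussianPDFReal, hvc]
  rw [Finset.prod_mul_distrib, Finset.prod_mul_distrib, ← Real.exp_sum, ← Real.exp_sum]
  have hexp : ∑ i, -(x i - w i) ^ 2 / (2 * σ ^ 2)
      = (∑ i, ((x i - m i) ^ 2 - (x i - w i) ^ 2)) / (2 * σ ^ 2)
        + ∑ i, -(x i - m i) ^ 2 / (2 * σ ^ 2) := by
    rw [Finset.sum_div, ← Finset.sum_add_distrib]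
    refine Finset.sum_congr rfl fun i _ => ?_
    field_simp
    ring
  rw [hexp, Real.exp_add]
  ring

lemma gp_half (hσ : 0 < σ) (w c : Fin n → ℝ) :
    gaussPi n w σ {x | (∑ i, c i * w i) < ∑ i, c i * x i} ≤ 1 / 2 := by
  set Z : (Fin n → ℝ) → ℝ := fun x => ∑ i, c i * x i with hZ
  set b : ℝ := ∑ i, c i * w i with hb
  have hZm : Measurable Z := Finset.measurable_sum _ fun i _ =>
    (measurable_pi_apply i).const_mul _
  have hF : Measurable (fun x : Fin n → ℝ => fun i => 2 * w i - x i) :=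
    measurable_pi_lambda _ fun i => measurable_const.sub (measurable_pi_apply i)
  have hmap : (gaussPi n w σ).map (fun x i => 2 * w i - x i) = gaussPi n w σ :=
    gp_pi_map _ _ (fun i y => 2 * w i - y)
      (fun i => measurable_const.sub measurable_id) (fun i => gp_refl_1d _ _)
  have hprob : IsProbabilityMeasure (gaussPi n w σ) := by
    unfold gaussPi; infer_instance
  have hU : MeasurableSet {x : Fin n → ℝ | b < Z x} := measurableSet_lt measurable_const hZm
  have hV : MeasurableSet {x : Fin n → ℝ | Z x < b} := measurableSet_lt hZm measurable_const
  have hZR : ∀ x : Fin n → ℝ, Z (fun i => 2 * w i - x i) = 2 * b - Z x := by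
    intro x
    simp only [hZ, hb, mul_sub, Finset.sum_sub_distrib, Finset.mul_sum]
    congr 1
    exact Finset.sum_congr rfl fun i _ => by ring
  have heq : gaussPi n w σ {x | b < Z x} = gaussPi n w σ {x | Z x < b} := by
    conv_lhs => rw [← hmap]
    rw [Measure.map_apply hF hU]
    congr 1
    ext x
    simp only [Set.mem_preimage, Set.mem_setOf_eq, hZR x]
    constructor <;> intro h <;> linarith
  have hdisj : Disjoint {x : Fin n → ℝ | b < Z x} {x : Fin n → ℝ | Z x < b} := by
    rw [Set.disjoint_left]
    intro x h1 h2
    simp only [Set.mem_setOf_eq] at h1 h2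
    exact absurd h1 (not_lt.mpr h2.le)
  have hle : gaussPi n w σ {x | b < Z x} + gaussPi n w σ {x | Z x < b} ≤ 1 := by
    rw [← measure_union hdisj hV]
    exact (measure_mono (Set.subset_univ _)).trans_eq measure_univ
  rw [← heq] at hle
  refine (ENNReal.le_div_iff_mul_le (Or.inl two_ne_zero) (Or.inl ENNReal.ofNat_ne_top)).mpr ?_
  rw [mul_two]
  exact hle

end pointwise

section compare

variable {n : ℕ} {σ : ℝ}

lemma gp_compare (hσ : 0 < σ) (m w : Fin n → ℝ) {T : Set (Fin n → ℝ)} (hT : MeasurableSet T)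
    {K : ℝ} (hK : 0 ≤ K)
    (h : ∀ x ∈ T, (∏ i, gaussianPDFReal (m i) (σ ^ 2).toNNReal (x i))
        ≤ K * ∏ i, gaussianPDFReal (w i) (σ ^ 2).toNNReal (x i)) :
    gaussPi n m σ T ≤ ENNReal.ofReal K * gaussPi n w σ T := by
  rw [gp_density m hσ, gp_density w hσ, withDensity_apply _ hT, withDensity_apply _ hT,
    ← lintegral_const_mul' _ _ ENNReal.ofReal_ne_top]
  refine setLIntegral_mono' hT fun x hx => ?_
  rw [← ENNReal.ofReal_mul hK]
  exact ENNReal.ofReal_le_ofReal (h x hx)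

lemma gp_sum_expand (m c x : Fin n → ℝ) (r : ℝ) :
    ∑ i, ((x i - m i) ^ 2 - (x i - (m i + r * c i)) ^ 2)
      = 2 * r * (∑ i, c i * (x i - m i)) - r ^ 2 * ∑ i, c i ^ 2 := by
  rw [Finset.mul_sum, Finset.mul_sum, ← Finset.sum_sub_distrib]
  exact Finset.sum_congr rfl fun i _ => by ring

lemma gp_shift (hσ : 0 < σ) (m c : Fin n → ℝ) {r a1 a2 : ℝ} (hr : 0 ≤ r) (ha2 : a2 ≤ 0) :
    ENNReal.ofReal (Real.exp (-(r ^ 2 * (∑ i, c i ^ 2)) / (2 * σ ^ 2)))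
      * gaussPi n m σ {x | a1 < ∑ i, c i * (x i - m i) ∧ ∑ i, c i * (x i - m i) ≤ a2}
    ≤ gaussPi n m σ {x | a1 + r * (∑ i, c i ^ 2) < ∑ i, c i * (x i - m i)
        ∧ ∑ i, c i * (x i - m i) ≤ a2 + r * (∑ i, c i ^ 2)} := by
  have hσ2 : (0:ℝ) < σ ^ 2 := by positivity
  set d2 : ℝ := ∑ i, c i ^ 2 with hd2
  set ζ : (Fin n → ℝ) → ℝ := fun x => ∑ i, c i * (x i - m i) with hζ
  have hζm : Measurable ζ := Finset.measurable_sum _ fun i _ =>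
    ((measurable_pi_apply i).sub_const _).const_mul _
  have hB0 : MeasurableSet {x : Fin n → ℝ | a1 < ζ x ∧ ζ x ≤ a2} :=
    (measurableSet_lt measurable_const hζm).inter (measurableSet_le hζm measurable_const)
  have hB1 : MeasurableSet {x : Fin n → ℝ | a1 + r * d2 < ζ x ∧ ζ x ≤ a2 + r * d2} :=
    (measurableSet_lt measurable_const hζm).inter (measurableSet_le hζm measurable_const)
  set pd : (Fin n → ℝ) → ℝ≥0∞ :=
    fun x => ENNReal.ofReal (∏ i, gaussianPDFReal (m i) (σ ^ 2).toNNReal (x i)) with hpd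
  rw [gp_density m hσ, withDensity_apply _ hB0, withDensity_apply _ hB1,
    ← lintegral_indicator hB0, ← lintegral_indicator hB1]
  set u : Fin n → ℝ := fun i => r * c i with hu
  have htrans := lintegral_add_right_eq_self
    (μ := (volume : Measure (Fin n → ℝ)))
    ({x : Fin n → ℝ | a1 + r * d2 < ζ x ∧ ζ x ≤ a2 + r * d2}.indicator pd) u
  rw [← htrans, ← lintegral_const_mul' _ _ ENNReal.ofReal_ne_top]
  apply lintegral_mono
  intro x
  dsimp only
  by_cases hx : x ∈ {x : Fin n → ℝ | a1 < ζ x ∧ ζ x ≤ a2}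
  · rw [Set.indicator_of_mem hx]
    have hζu : ζ (x + u) = ζ x + r * d2 := by
      simp only [hζ, hd2, Pi.add_apply, hu]
      rw [Finset.mul_sum, ← Finset.sum_add_distrib]
      exact Finset.sum_congr rfl fun i _ => by ring
    have hxu : x + u ∈ {x : Fin n → ℝ | a1 + r * d2 < ζ x ∧ ζ x ≤ a2 + r * d2} := by
      obtain ⟨h1, h2⟩ := hx
      exact ⟨by rw [hζu]; linarith, by rw [hζu]; linarith⟩
    rw [Set.indicator_of_mem hxu, hpd]
    rw [← ENNReal.ofReal_mul (Real.exp_nonneg _)]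
    apply ENNReal.ofReal_le_ofReal
    have h1 : ∏ i, gaussianPDFReal (m i) (σ ^ 2).toNNReal ((x + u) i)
        = ∏ i, gaussianPDFReal (m i + (-r) * c i) (σ ^ 2).toNNReal (x i) := by
      refine Finset.prod_congr rfl fun i _ => ?_
      rw [Pi.add_apply, hu, gaussianPDFReal_add]
      congr 1
      ring
    rw [h1, gp_prod_pdf_ratio hσ m (fun i => m i + (-r) * c i) x, gp_sum_expand m c x (-r)]
    apply mul_le_mul_of_nonneg_right _ (Finset.prod_nonneg fun i _ =>
      gaussianPDFReal_nonneg _ _ _)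
    apply Real.exp_le_exp.mpr
    have hxx : ζ x ≤ a2 := hx.2
    have hnum : -(r ^ 2 * d2) ≤ 2 * (-r) * ζ x - (-r) ^ 2 * d2 := by nlinarith
    exact (div_le_div_iff_of_pos_right (by positivity)).mpr hnum
  · rw [Set.indicator_of_notMem hx, mul_zero]
    exact zero_le

end compare


open Real

lemma gp_exp_half_le : Real.exp (1/2) ≤ 2.5 := by
  have h12 : Real.exp (1/2) * Real.exp (1/2) = Real.exp 1 := by
    rw [← Real.exp_add]; norm_num
  nlinarith [Real.exp_one_lt_d9, Real.exp_pos (1/2 : ℝ)]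

lemma gp_log_ge {y : ℝ} (hy : 0 < y) : 1 - 1/y ≤ Real.log y := by
  have h := Real.log_le_sub_one_of_pos (show (0:ℝ) < 1/y by positivity)
  have h2 : Real.log (1/y) = - Real.log y := by
    rw [one_div, Real.log_inv]
  nlinarith

lemma gp_numA (Δ ε δ σt D : ℝ) (hΔ : 0 < Δ) (hε0 : 0 < ε) (hε1 : ε < 1)
    (hδ0 : 0 < δ) (hδ1 : δ < 1) (hσt : 0 < σt)
    (hvar : 2 * Δ ^ 2 * Real.log (1.25 / δ) / ε ^ 2 ≤ σt ^ 2)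
    (hD0 : 0 < D) (hDΔ : D ≤ Δ) (ha : 0 ≤ ε * σt ^ 2 - D ^ 2 / 2) :
    Real.exp (-(ε * σt ^ 2 - D ^ 2 / 2) ^ 2 / (2 * σt ^ 2 * D ^ 2)) * (1 / 2) ≤ δ := by
  set L := Real.log (1.25 / δ) with hL
  have hexpL : Real.exp L = 1.25 / δ := Real.exp_log (by positivity)
  have hδL : δ = 1.25 * Real.exp (-L) := by
    rw [Real.exp_neg, hexpL]
    field_simp
  by_cases hδh : 1/2 ≤ δ
  · have h1 : Real.exp (-(ε * σt ^ 2 - D ^ 2 / 2) ^ 2 / (2 * σt ^ 2 * D ^ 2)) ≤ 1 := by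
      apply Real.exp_le_one_iff.mpr
      have : (0:ℝ) ≤ (ε * σt ^ 2 - D ^ 2 / 2) ^ 2 / (2 * σt ^ 2 * D ^ 2) := by positivity
      rw [neg_div]
      linarith
    nlinarith
  · push_neg at hδh
    have hL25 : Real.log 2.5 ≤ L := by
      rw [hL]
      apply Real.log_le_log (by norm_num)
      rw [le_div_iff₀ hδ0]
      nlinarith
    have hL6 : (3:ℝ)/5 ≤ L := by
      have := gp_log_ge (show (0:ℝ) < 2.5 by norm_num)
      norm_num at this
      linarith
    set s2 := Real.sqrt (2 * L) with hs2
    have hs2sq : s2 ^ 2 = 2 * L := Real.sq_sqrt (by linarith)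
    have hs2pos : 0 < s2 := Real.sqrt_pos.mpr (by linarith)
    have hs2lb : 1.09 ≤ s2 := by nlinarith
    set σs := Δ * s2 / ε with hσs
    have hσspos : 0 < σs := by positivity
    have hσsle : σs ≤ σt := by
      have hsq : σs ^ 2 ≤ σt ^ 2 := by
        rw [hσs]
        rw [div_pow, mul_pow, hs2sq]
        calc Δ ^ 2 * (2 * L) / ε ^ 2 = 2 * Δ ^ 2 * L / ε ^ 2 := by ring
        _ ≤ σt ^ 2 := hvar
      nlinarith
    set t := (ε * σt ^ 2 - D ^ 2 / 2) / (σt * D) with ht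
    have htnn : 0 ≤ t := by
      apply div_nonneg ha (by positivity)
    have ht1 : t = ε * σt / D - D / (2 * σt) := by
      rw [ht]
      field_simp
    have ht2 : ε * σt / Δ - Δ / (2 * σt) ≤ t := by
      rw [ht1]
      have h1 : ε * σt / Δ ≤ ε * σt / D := by
        apply div_le_div_of_nonneg_left (by positivity) hD0 hDΔ
      have h2 : D / (2 * σt) ≤ Δ / (2 * σt) := by gcongr
      linarith
    have ht3 : s2 - ε / (2 * s2) ≤ ε * σt / Δ - Δ / (2 * σt) := by
      have e1 : ε * σs / Δ = s2 := by rw [hσs]; field_simp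
      have e2 : Δ / (2 * σs) = ε / (2 * s2) := by rw [hσs]; field_simp
      have h1 : ε * σs / Δ ≤ ε * σt / Δ := by gcongr
      have h2 : Δ / (2 * σt) ≤ Δ / (2 * σs) := by gcongr
      linarith [e1 ▸ h1, e2 ▸ h2]
    set t0 := s2 - ε / (2 * s2) with ht0
    have ht0pos : 0 < t0 := by
      rw [ht0]
      have h1 : ε / (2 * s2) < s2 := by
        rw [div_lt_iff₀ (by positivity)]
        nlinarith
      linarith
    have htge : t0 ≤ t := le_trans ht3 ht2
    have hT : 2 * L - ε ≤ t ^ 2 := by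
      have ht0sq : t0 ^ 2 ≤ t ^ 2 := by nlinarith
      have hmul : s2 * (ε / (2 * s2)) = ε / 2 := by
        field_simp
      have expand : t0 ^ 2 = s2 ^ 2 - 2 * (s2 * (ε / (2 * s2))) + (ε / (2 * s2)) ^ 2 := by
        rw [ht0]; ring
      have : 2 * L - ε ≤ t0 ^ 2 := by
        rw [expand, hs2sq, hmul]
        nlinarith [sq_nonneg (ε / (2 * s2))]
      linarith
    -- exponent identity
    have hexp_eq : -(ε * σt ^ 2 - D ^ 2 / 2) ^ 2 / (2 * σt ^ 2 * D ^ 2) = -(t ^ 2) / 2 := by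
      have h1 : σt ≠ 0 := ne_of_gt hσt
      have h2 : D ≠ 0 := ne_of_gt hD0
      rw [ht, div_pow, mul_pow, neg_div, neg_div, neg_inj, div_div]
      congr 1
      ring
    rw [hexp_eq]
    have hle : Real.exp (-(t^2)/2) ≤ Real.exp (1/2) * Real.exp (-L) := by
      rw [← Real.exp_add]
      apply Real.exp_le_exp.mpr
      nlinarith
    have h25 := gp_exp_half_le
    have hEpos := Real.exp_pos (-L)
    nlinarith

lemma gp_numB (Δ ε δ σt D : ℝ) (hΔ : 0 < Δ) (hε0 : 0 < ε) (hε1 : ε < 1)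
    (hδ0 : 0 < δ) (hδ1 : δ < 1) (hσt : 0 < σt)
    (hvar : 2 * Δ ^ 2 * Real.log (1.25 / δ) / ε ^ 2 ≤ σt ^ 2)
    (hD0 : 0 < D) (hDΔ : D ≤ Δ) (ha : ε * σt ^ 2 - D ^ 2 / 2 < 0) :
    1 / (1 + Real.exp (-(((D ^ 2 / 2 - ε * σt ^ 2) / (σt * D)) ^ 2) / 2)
        + Real.exp (-2 * ((D ^ 2 / 2 - ε * σt ^ 2) / (σt * D)) ^ 2)) + 1 / 2 ≤ δ := by
  set L := Real.log (1.25 / δ) with hL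
  have hexpL : Real.exp L = 1.25 / δ := Real.exp_log (by positivity)
  have hδL : δ = 1.25 * Real.exp (-L) := by
    rw [Real.exp_neg, hexpL]
    field_simp
  have hL5 : (1:ℝ)/5 ≤ L := by
    have h1 : Real.log 1.25 ≤ L := by
      rw [hL]
      apply Real.log_le_log (by norm_num)
      rw [le_div_iff₀ hδ0]
      nlinarith
    have h2 := gp_log_ge (show (0:ℝ) < 1.25 by norm_num)
    norm_num at h2
    linarith
  have hLε : L < ε / 4 := by
    have h1 : 2 * Δ ^ 2 * L / ε ^ 2 ≤ σt ^ 2 := hvar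
    have h2 : ε * σt ^ 2 < Δ ^ 2 / 2 := by nlinarith
    have h3 : 2 * Δ ^ 2 * L / ε ^ 2 * ε ≤ σt ^ 2 * ε := by nlinarith
    have h4 : 2 * Δ ^ 2 * L / ε ^ 2 * ε = 2 * Δ ^ 2 * L / ε := by
      field_simp
    rw [h4] at h3
    rw [div_le_iff₀ (by positivity)] at h3
    nlinarith
  have hδlb : (0.9375 : ℝ) ≤ δ := by
    have h1 : 1 - L ≤ Real.exp (-L) := by
      have := Real.add_one_le_exp (-L)
      linarith
    nlinarith
  set q : ℝ := (D ^ 2 / 2 - ε * σt ^ 2) / (σt * D) with hq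
  have hq0 : 0 < q := by
    apply div_pos (by linarith) (by positivity)
  have hq16 : q ≤ 0.16 := by
    set s2 := Real.sqrt (2 * L) with hs2
    have hs2sq : s2 ^ 2 = 2 * L := Real.sq_sqrt (by linarith)
    have hs2pos : 0 < s2 := Real.sqrt_pos.mpr (by linarith)
    have hs2lb : 0.632 ≤ s2 := by nlinarith
    set σs := Δ * s2 / ε with hσs
    have hσspos : 0 < σs := by positivity
    have hσsle : σs ≤ σt := by
      have hsq : σs ^ 2 ≤ σt ^ 2 := by
        rw [hσs, div_pow, mul_pow, hs2sq]
        calc Δ ^ 2 * (2 * L) / ε ^ 2 = 2 * Δ ^ 2 * L / ε ^ 2 := by ring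
        _ ≤ σt ^ 2 := hvar
      nlinarith
    have hq1 : q = D / (2 * σt) - ε * σt / D := by
      rw [hq]
      field_simp
    have h1 : D / (2 * σt) ≤ Δ / (2 * σt) := by gcongr
    have h2 : ε * σt / Δ ≤ ε * σt / D :=
      div_le_div_of_nonneg_left (by positivity) hD0 hDΔ
    have h3 : Δ / (2 * σt) ≤ Δ / (2 * σs) := by gcongr
    have h4 : ε * σs / Δ ≤ ε * σt / Δ := by gcongr
    have e1 : ε * σs / Δ = s2 := by rw [hσs]; field_simp
    have e2 : Δ / (2 * σs) = ε / (2 * s2) := by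
      rw [hσs]
      field_simp
    have h5 : ε / (2 * s2) ≤ 1 / (2 * s2) := by gcongr
    have h6 : 1 / (2 * s2) ≤ 1 / (2 * 0.632) := by gcongr
    have h7 : q ≤ ε / (2 * s2) - s2 := by
      rw [hq1]
      have := e1 ▸ h4
      have := e2 ▸ h3
      linarith
    calc q ≤ ε / (2 * s2) - s2 := h7
    _ ≤ 1 / (2 * 0.632) - 0.632 := by linarith
    _ ≤ 0.16 := by norm_num
  have hqsq : q ^ 2 ≤ 0.0256 := by nlinarith
  have he1 : 1 - 0.0128 ≤ Real.exp (-(q ^ 2) / 2) := by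
    have := Real.add_one_le_exp (-(q ^ 2) / 2)
    nlinarith
  have he2 : 1 - 0.0512 ≤ Real.exp (-2 * q ^ 2) := by
    have := Real.add_one_le_exp (-2 * q ^ 2)
    nlinarith
  have hsum : 2.936 ≤ 1 + Real.exp (-(q ^ 2) / 2) + Real.exp (-2 * q ^ 2) := by linarith
  have hfrac : 1 / (1 + Real.exp (-(q ^ 2) / 2) + Real.exp (-2 * q ^ 2)) ≤ 1 / 2.936 := by
    gcongr
  have : (1:ℝ) / 2.936 + 1 / 2 ≤ 0.9375 := by norm_num
  linarith

section tail

variable {n : ℕ}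

lemma gp_shift' {σ : ℝ} (hσ : 0 < σ) (m c : Fin n → ℝ) {r a1 a2 b1 b2 : ℝ} (hr : 0 ≤ r)
    (ha2 : a2 ≤ 0) (hb1 : b1 = a1 + r * ∑ i, c i ^ 2) (hb2 : b2 = a2 + r * ∑ i, c i ^ 2)
    (K : ℝ≥0∞) (hK : K = ENNReal.ofReal (Real.exp (-(r ^ 2 * (∑ i, c i ^ 2)) / (2 * σ ^ 2)))) :
    K * gaussPi n m σ {x | a1 < ∑ i, c i * (x i - m i) ∧ ∑ i, c i * (x i - m i) ≤ a2}
    ≤ gaussPi n m σ {x | b1 < ∑ i, c i * (x i - m i) ∧ ∑ i, c i * (x i - m i) ≤ b2} := by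
  subst hb1 hb2 hK
  exact gp_shift hσ m c hr ha2

lemma gp_sum_split (m c : Fin n → ℝ) (x : Fin n → ℝ) :
    ∑ i, c i * (x i - m i) = (∑ i, c i * x i) - ∑ i, c i * m i := by
  rw [← Finset.sum_sub_distrib]
  exact Finset.sum_congr rfl fun i _ => by ring

lemma gp_tail (Δ ε δ σt D : ℝ) (hΔ : 0 < Δ) (hε0 : 0 < ε) (hε1 : ε < 1)
    (hδ0 : 0 < δ) (hδ1 : δ < 1) (hσt : 0 < σt)
    (hvar : 2 * Δ ^ 2 * Real.log (1.25 / δ) / ε ^ 2 ≤ σt ^ 2)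
    (hD0 : 0 < D) (hDΔ : D ≤ Δ) (m c : Fin n → ℝ) (hd2 : ∑ i, c i ^ 2 = D ^ 2) :
    gaussPi n m σt {x | ε * σt ^ 2 - D ^ 2 / 2 < ∑ i, c i * (x i - m i)}
      ≤ ENNReal.ofReal δ := by
  have hσ2 : (0:ℝ) < σt ^ 2 := by positivity
  have hD2 : (0:ℝ) < D ^ 2 := by positivity
  have hζm : Measurable (fun x : Fin n → ℝ => ∑ i, c i * (x i - m i)) :=
    Finset.measurable_sum _ fun i _ => ((measurable_pi_apply i).sub_const _).const_mul _
  have hTm : MeasurableSet {x : Fin n → ℝ | ε * σt ^ 2 - D ^ 2 / 2 < ∑ i, c i * (x i - m i)} :=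
    measurableSet_lt measurable_const hζm
  have hhalfE : (1/2 : ℝ≥0∞) = ENNReal.ofReal (1/2) := by
    rw [ENNReal.ofReal_div_of_pos (by norm_num)]
    norm_num
  rcases le_or_gt 0 (ε * σt ^ 2 - D ^ 2 / 2) with hA0 | hA0
  · -- shifted mean w, Chernoff-type bound
    set a : ℝ := ε * σt ^ 2 - D ^ 2 / 2 with ha
    clear_value a
    have hsd2 : a / D ^ 2 * D ^ 2 = a := div_mul_cancel₀ a (ne_of_gt hD2)
    have step1 : gaussPi n m σt {x | a < ∑ i, c i * (x i - m i)}
        ≤ ENNReal.ofReal (Real.exp (-(a ^ 2) / (2 * σt ^ 2 * D ^ 2)))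
          * gaussPi n (fun i => m i + a / D ^ 2 * c i) σt
              {x | a < ∑ i, c i * (x i - m i)} := by
      apply gp_compare hσt m _ hTm (Real.exp_nonneg _)
      intro x hx
      simp only [Set.mem_setOf_eq] at hx
      rw [gp_prod_pdf_ratio hσt (fun i => m i + a / D ^ 2 * c i) m x]
      apply mul_le_mul_of_nonneg_right _ (Finset.prod_nonneg fun i _ =>
        gaussianPDFReal_nonneg _ _ _)
      have hswap : ∑ i, ((x i - (m i + a / D ^ 2 * c i)) ^ 2 - (x i - m i) ^ 2)
          = -(∑ i, ((x i - m i) ^ 2 - (x i - (m i + a / D ^ 2 * c i)) ^ 2)) := by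
        rw [← Finset.sum_neg_distrib]
        exact Finset.sum_congr rfl fun i _ => by ring
      rw [hswap, gp_sum_expand m c x (a / D ^ 2), hd2]
      apply Real.exp_le_exp.mpr
      rw [div_le_div_iff₀ (by positivity) (by positivity)]
      have e1 : (a / D ^ 2) ^ 2 * D ^ 2 * (2 * σt ^ 2 * D ^ 2) = a ^ 2 * (2 * σt ^ 2) := by
        field_simp
      have e2 : a / D ^ 2 * (∑ i, c i * (x i - m i)) * (2 * σt ^ 2 * D ^ 2)
          = a * (∑ i, c i * (x i - m i)) * (2 * σt ^ 2) := by
        field_simp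
      nlinarith [e1, e2, mul_nonneg (mul_nonneg (by linarith : (0:ℝ) ≤ 2 * σt ^ 2)
        hA0) (le_of_lt (sub_pos.mpr hx))]
    have step2 : gaussPi n (fun i => m i + a / D ^ 2 * c i) σt
        {x | a < ∑ i, c i * (x i - m i)} ≤ 1 / 2 := by
      have hhalf := gp_half hσt (fun i => m i + a / D ^ 2 * c i) c
      have hcw : ∑ i, c i * (m i + a / D ^ 2 * c i) = (∑ i, c i * m i) + a := by
        have : ∀ i ∈ Finset.univ, c i * (m i + a / D ^ 2 * c i)
            = c i * m i + a / D ^ 2 * c i ^ 2 := fun i _ => by ring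
        rw [Finset.sum_congr rfl this, Finset.sum_add_distrib, ← Finset.mul_sum, hd2, hsd2]
      have hseteq : {x : Fin n → ℝ | a < ∑ i, c i * (x i - m i)}
          = {x : Fin n → ℝ | (∑ i, c i * (m i + a / D ^ 2 * c i)) < ∑ i, c i * x i} := by
        ext x
        simp only [Set.mem_setOf_eq, gp_sum_split m c x, hcw]
        constructor <;> intro h <;> linarith
      rw [hseteq]
      exact hhalf
    calc gaussPi n m σt {x | a < ∑ i, c i * (x i - m i)}
        ≤ ENNReal.ofReal (Real.exp (-(a ^ 2) / (2 * σt ^ 2 * D ^ 2)))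
          * gaussPi n (fun i => m i + a / D ^ 2 * c i) σt
              {x | a < ∑ i, c i * (x i - m i)} := step1
      _ ≤ ENNReal.ofReal (Real.exp (-(a ^ 2) / (2 * σt ^ 2 * D ^ 2))) * (1 / 2) :=
          mul_le_mul_right step2 _
      _ = ENNReal.ofReal (Real.exp (-(a ^ 2) / (2 * σt ^ 2 * D ^ 2)) * (1 / 2)) := by
          rw [hhalfE, ← ENNReal.ofReal_mul (Real.exp_nonneg _)]
      _ ≤ ENNReal.ofReal δ := by
          apply ENNReal.ofReal_le_ofReal
          have hnum := gp_numA Δ ε δ σt D hΔ hε0 hε1 hδ0 hδ1 hσt hvar hD0 hDΔ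
            (by rw [← ha]; exact hA0)
          calc Real.exp (-(a ^ 2) / (2 * σt ^ 2 * D ^ 2)) * (1 / 2)
              = Real.exp (-(ε * σt ^ 2 - D ^ 2 / 2) ^ 2 / (2 * σt ^ 2 * D ^ 2)) * (1 / 2) := by
                rw [ha]
            _ ≤ δ := hnum
  · -- slab argument
    set b : ℝ := D ^ 2 / 2 - ε * σt ^ 2 with hb
    clear_value b
    have hbpos : 0 < b := by rw [hb]; linarith
    set q : ℝ := b / (σt * D) with hq
    clear_value q
    have hq0 : 0 < q := by rw [hq]; exact div_pos hbpos (by positivity)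
    set e1 : ℝ := Real.exp (-(q ^ 2) / 2) with he1
    set e2 : ℝ := Real.exp (-2 * q ^ 2) with he2
    clear_value e1 e2
    have he1p : 0 < e1 := by rw [he1]; exact Real.exp_pos _
    have he2p : 0 < e2 := by rw [he2]; exact Real.exp_pos _
    have hshift1 : ENNReal.ofReal e1
        * gaussPi n m σt {x | -b < ∑ i, c i * (x i - m i) ∧ ∑ i, c i * (x i - m i) ≤ 0}
        ≤ gaussPi n m σt {x | 0 < ∑ i, c i * (x i - m i) ∧ ∑ i, c i * (x i - m i) ≤ b} := by
      apply gp_shift' hσt m c (r := b / D ^ 2) (by positivity) le_rfl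
      · rw [hd2, div_mul_cancel₀ b (ne_of_gt hD2)]; ring
      · rw [hd2, div_mul_cancel₀ b (ne_of_gt hD2)]; ring
      · rw [he1]
        congr 2
        rw [hd2, hq]
        field_simp
    have hshift2 : ENNReal.ofReal e2
        * gaussPi n m σt {x | -b < ∑ i, c i * (x i - m i) ∧ ∑ i, c i * (x i - m i) ≤ 0}
        ≤ gaussPi n m σt {x | b < ∑ i, c i * (x i - m i) ∧ ∑ i, c i * (x i - m i) ≤ 2 * b} := by
      apply gp_shift' hσt m c (r := 2 * b / D ^ 2) (by positivity) le_rfl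
      · rw [hd2, div_mul_cancel₀ (2 * b) (ne_of_gt hD2)]; ring
      · rw [hd2, div_mul_cancel₀ (2 * b) (ne_of_gt hD2)]; ring
      · rw [he2]
        congr 2
        rw [hd2, hq]
        field_simp
    have hB0m : MeasurableSet {x : Fin n → ℝ | -b < ∑ i, c i * (x i - m i)
        ∧ ∑ i, c i * (x i - m i) ≤ 0} :=
      (measurableSet_lt measurable_const hζm).inter (measurableSet_le hζm measurable_const)
    have hB1m : MeasurableSet {x : Fin n → ℝ | 0 < ∑ i, c i * (x i - m i)
        ∧ ∑ i, c i * (x i - m i) ≤ b} :=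
      (measurableSet_lt measurable_const hζm).inter (measurableSet_le hζm measurable_const)
    have hB2m : MeasurableSet {x : Fin n → ℝ | b < ∑ i, c i * (x i - m i)
        ∧ ∑ i, c i * (x i - m i) ≤ 2 * b} :=
      (measurableSet_lt measurable_const hζm).inter (measurableSet_le hζm measurable_const)
    have hprob : IsProbabilityMeasure (gaussPi n m σt) := by
      unfold gaussPi; infer_instance
    -- sum of the three slabs is at most 1
    have hsum3 : gaussPi n m σt {x | -b < ∑ i, c i * (x i - m i) ∧ ∑ i, c i * (x i - m i) ≤ 0}
        + gaussPi n m σt {x | 0 < ∑ i, c i * (x i - m i) ∧ ∑ i, c i * (x i - m i) ≤ b}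
        + gaussPi n m σt {x | b < ∑ i, c i * (x i - m i) ∧ ∑ i, c i * (x i - m i) ≤ 2 * b}
        ≤ 1 := by
      have hd01 : Disjoint {x : Fin n → ℝ | -b < ∑ i, c i * (x i - m i)
          ∧ ∑ i, c i * (x i - m i) ≤ 0}
          {x : Fin n → ℝ | 0 < ∑ i, c i * (x i - m i) ∧ ∑ i, c i * (x i - m i) ≤ b} := by
        rw [Set.disjoint_left]
        rintro x ⟨_, h2⟩ ⟨h3, _⟩
        exact absurd h3 (not_lt.mpr h2)
      have hd012 : Disjoint ({x : Fin n → ℝ | -b < ∑ i, c i * (x i - m i)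
          ∧ ∑ i, c i * (x i - m i) ≤ 0}
          ∪ {x : Fin n → ℝ | 0 < ∑ i, c i * (x i - m i) ∧ ∑ i, c i * (x i - m i) ≤ b})
          {x : Fin n → ℝ | b < ∑ i, c i * (x i - m i) ∧ ∑ i, c i * (x i - m i) ≤ 2 * b} := by
        rw [Set.disjoint_left]
        rintro x (⟨_, h2⟩ | ⟨_, h2⟩) ⟨h3, _⟩
        · exact absurd h3 (not_lt.mpr (le_trans h2 (le_of_lt hbpos)))
        · exact absurd h3 (not_lt.mpr h2)
      rw [← measure_union hd01 hB1m, ← measure_union hd012 hB2m]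
      exact (measure_mono (Set.subset_univ _)).trans_eq measure_univ
    -- deduce bound on B0
    have hcoef : (ENNReal.ofReal (1 + e1 + e2))
        * gaussPi n m σt {x | -b < ∑ i, c i * (x i - m i) ∧ ∑ i, c i * (x i - m i) ≤ 0}
        ≤ 1 := by
      rw [ENNReal.ofReal_add (by linarith) (le_of_lt he2p),
        ENNReal.ofReal_add (by norm_num) (le_of_lt he1p), ENNReal.ofReal_one,
        add_mul, add_mul, one_mul]
      calc _ ≤ gaussPi n m σt {x | -b < ∑ i, c i * (x i - m i) ∧ ∑ i, c i * (x i - m i) ≤ 0}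
            + gaussPi n m σt {x | 0 < ∑ i, c i * (x i - m i) ∧ ∑ i, c i * (x i - m i) ≤ b}
            + gaussPi n m σt {x | b < ∑ i, c i * (x i - m i) ∧ ∑ i, c i * (x i - m i) ≤ 2 * b} := by
            exact add_le_add (add_le_add le_rfl hshift1) hshift2
        _ ≤ 1 := hsum3
    have hB0le : gaussPi n m σt {x | -b < ∑ i, c i * (x i - m i) ∧ ∑ i, c i * (x i - m i) ≤ 0}
        ≤ ENNReal.ofReal (1 / (1 + e1 + e2)) := by
      have hRpos : (0:ℝ) < 1 + e1 + e2 := by linarith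
      rw [one_div, ENNReal.ofReal_inv_of_pos hRpos]
      rw [ENNReal.le_inv_iff_mul_le]
      rw [mul_comm]
      exact hcoef
    -- tail is contained in B0 union upper half
    have hhalf := gp_half hσt m c
    have hsub : {x : Fin n → ℝ | ε * σt ^ 2 - D ^ 2 / 2 < ∑ i, c i * (x i - m i)}
        ⊆ {x : Fin n → ℝ | -b < ∑ i, c i * (x i - m i) ∧ ∑ i, c i * (x i - m i) ≤ 0}
          ∪ {x : Fin n → ℝ | (∑ i, c i * m i) < ∑ i, c i * x i} := by
      intro x hx
      simp only [Set.mem_setOf_eq] at hx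
      have hax : -b < ∑ i, c i * (x i - m i) := by rw [hb]; linarith
      rcases le_or_gt (∑ i, c i * (x i - m i)) 0 with hle | hgt
      · exact Or.inl ⟨hax, hle⟩
      · right
        simp only [Set.mem_setOf_eq]
        have := gp_sum_split m c x
        linarith [gp_sum_split m c x]
    calc gaussPi n m σt {x | ε * σt ^ 2 - D ^ 2 / 2 < ∑ i, c i * (x i - m i)}
        ≤ gaussPi n m σt ({x | -b < ∑ i, c i * (x i - m i) ∧ ∑ i, c i * (x i - m i) ≤ 0}
          ∪ {x | (∑ i, c i * m i) < ∑ i, c i * x i}) := measure_mono hsub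
      _ ≤ gaussPi n m σt {x | -b < ∑ i, c i * (x i - m i) ∧ ∑ i, c i * (x i - m i) ≤ 0}
          + gaussPi n m σt {x | (∑ i, c i * m i) < ∑ i, c i * x i} := measure_union_le _ _
      _ ≤ ENNReal.ofReal (1 / (1 + e1 + e2)) + 1 / 2 := add_le_add hB0le hhalf
      _ = ENNReal.ofReal (1 / (1 + e1 + e2) + 1 / 2) := by
          rw [hhalfE, ← ENNReal.ofReal_add (by positivity) (by norm_num)]
      _ ≤ ENNReal.ofReal δ := by
          apply ENNReal.ofReal_le_ofReal
          have hnum := gp_numB Δ ε δ σt D hΔ hε0 hε1 hδ0 hδ1 hσt hvar hD0 hDΔ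
            (by rw [hb] at hbpos; linarith)
          rw [he1, he2, hq, hb]
          exact hnum

end tail


/-- **The classical Gaussian mechanism is `(ε, δ)`-differentially private.**
Let `n ≥ 1`, `Δ > 0`, `ε ∈ (0,1)`, `δ ∈ (0,1)`, and let `σ̃ > 0` satisfy
`σ̃² ≥ 2Δ² log(1.25/δ)/ε²`. Then for all `m, m' ∈ ℝⁿ` at Euclidean distance at most `Δ`
and every measurable `S ⊆ ℝⁿ`, `N(m, σ̃²Iₙ)(S) ≤ e^ε N(m', σ̃²Iₙ)(S) + δ`. -/
theorem classical_gaussian_mechanism_dp (n : ℕ) (hn : 1 ≤ n)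
    (Δ ε δ σt : ℝ) (hΔ : 0 < Δ) (hε : ε ∈ Set.Ioo (0 : ℝ) 1)
    (hδ : δ ∈ Set.Ioo (0 : ℝ) 1) (hσt : 0 < σt)
    (hvar : 2 * Δ ^ 2 * Real.log (1.25 / δ) / ε ^ 2 ≤ σt ^ 2)
    (m m' : Fin n → ℝ) (hmm : Real.sqrt (∑ i, (m i - m' i) ^ 2) ≤ Δ)
    (S : Set (Fin n → ℝ)) (hS : MeasurableSet S) :
    ((gaussPi n m σt) S).toReal ≤ Real.exp ε * ((gaussPi n m' σt) S).toReal + δ := by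
  obtain ⟨hε0, hε1⟩ := hε
  obtain ⟨hδ0, hδ1⟩ := hδ
  have hprob : IsProbabilityMeasure (gaussPi n m σt) := by unfold gaussPi; infer_instance
  have hprob' : IsProbabilityMeasure (gaussPi n m' σt) := by unfold gaussPi; infer_instance
  have hd2nn : (0:ℝ) ≤ ∑ i, (m i - m' i) ^ 2 := Finset.sum_nonneg fun i _ => sq_nonneg _
  -- main ENNReal-level bound
  have key : gaussPi n m σt S
      ≤ ENNReal.ofReal (Real.exp ε) * gaussPi n m' σt S + ENNReal.ofReal δ := by
    by_cases hd0 : ∑ i, (m i - m' i) ^ 2 = 0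
    · have hmm' : m = m' := by
        funext i
        have hz := (Finset.sum_eq_zero_iff_of_nonneg
          (fun i _ => sq_nonneg (m i - m' i))).mp hd0 i (Finset.mem_univ i)
        have := pow_eq_zero_iff (n := 2) (by norm_num) |>.mp hz
        linarith [sub_eq_zero.mp this]
      rw [hmm']
      calc gaussPi n m' σt S ≤ ENNReal.ofReal (Real.exp ε) * gaussPi n m' σt S := by
            nth_rewrite 1 [← one_mul (gaussPi n m' σt S)]
            apply mul_le_mul_left
            rw [← ENNReal.ofReal_one]
            exact ENNReal.ofReal_le_ofReal (by nlinarith [Real.add_one_le_exp ε])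
        _ ≤ ENNReal.ofReal (Real.exp ε) * gaussPi n m' σt S + ENNReal.ofReal δ := le_self_add
    · have hd2pos : 0 < ∑ i, (m i - m' i) ^ 2 := lt_of_le_of_ne hd2nn (Ne.symm hd0)
      set c : Fin n → ℝ := fun i => m i - m' i with hc
      have hcs : ∀ i, c i = m i - m' i := fun i => rfl
      have hsum_eq : ∑ i, c i ^ 2 = ∑ i, (m i - m' i) ^ 2 := rfl
      set D : ℝ := Real.sqrt (∑ i, (m i - m' i) ^ 2) with hD
      have hD2 : D ^ 2 = ∑ i, (m i - m' i) ^ 2 := Real.sq_sqrt hd2nn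
      have hDpos : 0 < D := Real.sqrt_pos.mpr hd2pos
      have hDΔ : D ≤ Δ := hmm
      have hd2 : ∑ i, c i ^ 2 = D ^ 2 := by rw [hsum_eq, hD2]
      have hζm : Measurable (fun x : Fin n → ℝ => ∑ i, c i * (x i - m i)) :=
        Finset.measurable_sum _ fun i _ => ((measurable_pi_apply i).sub_const _).const_mul _
      have hAm : MeasurableSet {x : Fin n → ℝ | ∑ i, c i * (x i - m i)
          ≤ ε * σt ^ 2 - D ^ 2 / 2} := measurableSet_le hζm measurable_const
      -- part (a)
      have partA : gaussPi n m σt (S ∩ {x | ∑ i, c i * (x i - m i) ≤ ε * σt ^ 2 - D ^ 2 / 2})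
          ≤ ENNReal.ofReal (Real.exp ε)
            * gaussPi n m' σt (S ∩ {x | ∑ i, c i * (x i - m i) ≤ ε * σt ^ 2 - D ^ 2 / 2}) := by
        apply gp_compare hσt m m' (hS.inter hAm) (Real.exp_nonneg ε)
        intro x hx
        have hxA : ∑ i, c i * (x i - m i) ≤ ε * σt ^ 2 - D ^ 2 / 2 := hx.2
        rw [gp_prod_pdf_ratio hσt m' m x]
        apply mul_le_mul_of_nonneg_right _ (Finset.prod_nonneg fun i _ =>
          gaussianPDFReal_nonneg _ _ _)
        apply Real.exp_le_exp.mpr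
        -- compute the exponent
        have hmeq : ∀ i, m i = m' i + 1 * c i := fun i => by rw [hcs i]; ring
        have hsum1 : ∑ i, ((x i - m' i) ^ 2 - (x i - m i) ^ 2)
            = 2 * 1 * (∑ i, c i * (x i - m' i)) - 1 ^ 2 * ∑ i, c i ^ 2 := by
          rw [← gp_sum_expand m' c x 1]
          exact Finset.sum_congr rfl fun i _ => by rw [← hmeq i]
        have hsum2 : ∑ i, c i * (x i - m' i) = (∑ i, c i * (x i - m i)) + ∑ i, c i ^ 2 := by
          rw [← Finset.sum_add_distrib]
          refine Finset.sum_congr rfl fun i _ => ?_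
          rw [hcs i]
          ring
        rw [hsum1, hsum2, hd2]
        rw [div_le_iff₀ (by positivity)]
        nlinarith [hxA]
      -- part (b)
      have partB : gaussPi n m σt {x | ε * σt ^ 2 - D ^ 2 / 2 < ∑ i, c i * (x i - m i)}
          ≤ ENNReal.ofReal δ :=
        gp_tail Δ ε δ σt D hΔ hε0 hε1 hδ0 hδ1 hσt hvar hDpos hDΔ m c hd2
      -- combine
      have hsub : S ⊆ (S ∩ {x | ∑ i, c i * (x i - m i) ≤ ε * σt ^ 2 - D ^ 2 / 2})
          ∪ {x | ε * σt ^ 2 - D ^ 2 / 2 < ∑ i, c i * (x i - m i)} := by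
        intro x hxS
        rcases le_or_gt (∑ i, c i * (x i - m i)) (ε * σt ^ 2 - D ^ 2 / 2) with h | h
        · exact Or.inl ⟨hxS, h⟩
        · exact Or.inr h
      calc gaussPi n m σt S
          ≤ gaussPi n m σt ((S ∩ {x | ∑ i, c i * (x i - m i) ≤ ε * σt ^ 2 - D ^ 2 / 2})
            ∪ {x | ε * σt ^ 2 - D ^ 2 / 2 < ∑ i, c i * (x i - m i)}) := measure_mono hsub
        _ ≤ gaussPi n m σt (S ∩ {x | ∑ i, c i * (x i - m i) ≤ ε * σt ^ 2 - D ^ 2 / 2})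
            + gaussPi n m σt {x | ε * σt ^ 2 - D ^ 2 / 2 < ∑ i, c i * (x i - m i)} :=
            measure_union_le _ _
        _ ≤ ENNReal.ofReal (Real.exp ε)
            * gaussPi n m' σt (S ∩ {x | ∑ i, c i * (x i - m i) ≤ ε * σt ^ 2 - D ^ 2 / 2})
            + ENNReal.ofReal δ := add_le_add partA partB
        _ ≤ ENNReal.ofReal (Real.exp ε) * gaussPi n m' σt S + ENNReal.ofReal δ := by
            apply add_le_add_left
            exact mul_le_mul_right (measure_mono Set.inter_subset_left) _
  -- pass to real numbers
  have hfin : ENNReal.ofReal (Real.exp ε) * gaussPi n m' σt S + ENNReal.ofReal δ ≠ ⊤ := by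
    apply ENNReal.add_ne_top.mpr
    constructor
    · exact ENNReal.mul_ne_top ENNReal.ofReal_ne_top (measure_ne_top _ _)
    · exact ENNReal.ofReal_ne_top
  have := ENNReal.toReal_mono hfin key
  rw [ENNReal.toReal_add (ENNReal.mul_ne_top ENNReal.ofReal_ne_top (measure_ne_top _ _))
    ENNReal.ofReal_ne_top, ENNReal.toReal_mul, ENNReal.toReal_ofReal (Real.exp_nonneg ε),
    ENNReal.toReal_ofReal (le_of_lt hδ0)] at this
  exact this
end

section
/- Let b > 0, ε ≥ 0, and m, m' ∈ ℝ with r := |m − m'|. Let Lap(m, b) denote the measure on ℝ with density x ↦ (1/(2b)) exp(−|x − m|/b) with respect to Lebesgue measure. Then the hockey-stick divergence satisfies sup over measurable S ⊆ ℝ of [Lap(m, b)(S) − e^ε Lap(m', b)(S)] = max(0, 1 − e^{(ε − r/b)/2}). In particular, the privacy profile of the Laplace mechanism with scale b applied to a query of global ℓ₁-sensitivity Δ₁ is δ_F(ε) = [1 − e^{(ε − Δ₁/b)/2}]₊. -/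
open MeasureTheory

/-- The Laplace distribution `Lap(m, b)` with location `m` and scale `b > 0`:
the measure on `ℝ` with density `x ↦ (1/(2b)) exp(−|x − m|/b)` with respect to
Lebesgue measure. -/
noncomputable def lapMeasure (m b : ℝ) : Measure ℝ :=
  volume.withDensity fun x => ENNReal.ofReal (1 / (2 * b) * Real.exp (-|x - m| / b))

section LapAux

open Real Set

lemma intOn_Ioi (b m c : ℝ) (hb : 0 < b) :
    IntegrableOn (fun x => Real.exp (-(x - m) / b)) (Ioi c) := by
  have h := (exp_neg_integrableOn_Ioi c (inv_pos.mpr hb)).const_mul (Real.exp (m / b))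
  refine IntegrableOn.congr_fun h (fun x _ => ?_) measurableSet_Ioi
  rw [← Real.exp_add]; congr 1; field_simp; ring

lemma int_Ioi (b m c : ℝ) (hb : 0 < b) :
    ∫ x in Ioi c, Real.exp (-(x - m) / b) = b * Real.exp (-(c - m) / b) := by
  have h1 : ∀ x : ℝ, Real.exp (-(x - m) / b)
      = (fun y => Real.exp (m / b) * Real.exp (-y)) (x * b⁻¹) := by
    intro x; simp only [← Real.exp_add]; congr 1; field_simp; ring
  calc ∫ x in Ioi c, Real.exp (-(x - m) / b)
      = ∫ x in Ioi c, (fun y => Real.exp (m / b) * Real.exp (-y)) (x * b⁻¹) := by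
        simp_rw [← h1]
    _ = (b⁻¹)⁻¹ • ∫ y in Ioi (c * b⁻¹), Real.exp (m / b) * Real.exp (-y) :=
        integral_comp_mul_right_Ioi (fun y => Real.exp (m / b) * Real.exp (-y)) c
          (inv_pos.mpr hb)
    _ = b * (Real.exp (m / b) * Real.exp (-(c * b⁻¹))) := by
        rw [integral_const_mul, integral_exp_neg_Ioi]; simp [smul_eq_mul]
    _ = b * Real.exp (-(c - m) / b) := by
        rw [← Real.exp_add]; congr 1; field_simp; ring

lemma int_Iic (b m c : ℝ) (hb : 0 < b) :
    ∫ x in Iic c, Real.exp ((x - m) / b) = b * Real.exp ((c - m) / b) := by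
  have h := integral_comp_neg_Iic c (fun y => Real.exp (-(y - (-m)) / b))
  rw [int_Ioi b (-m) (-c) hb] at h
  calc ∫ x in Iic c, Real.exp ((x - m) / b)
      = ∫ x in Iic c, Real.exp (-(-x - (-m)) / b) := by
        refine setIntegral_congr_fun measurableSet_Iic (fun x _ => ?_); congr 1; ring
    _ = b * Real.exp (-(-c - (-m)) / b) := h
    _ = b * Real.exp ((c - m) / b) := by congr 1; ring

lemma intOn_Iic (b m c : ℝ) (hb : 0 < b) :
    IntegrableOn (fun x => Real.exp ((x - m) / b)) (Iic c) := by
  have mE : MeasurableEmbedding (Neg.neg : ℝ → ℝ) :=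
    (Homeomorph.neg ℝ).measurableEmbedding
  rw [← Measure.map_neg_eq_self (volume : Measure ℝ), mE.integrableOn_map_iff]
  simp only [Function.comp_def, neg_preimage, neg_Iic]
  rw [integrableOn_Ici_iff_integrableOn_Ioi]
  exact IntegrableOn.congr_fun (intOn_Ioi b (-m) (-c) hb)
    (fun x _ => by congr 1; ring) measurableSet_Ioi

lemma int_E (b m : ℝ) (hb : 0 < b) :
    Integrable (fun x => Real.exp (-|x - m| / b)) := by
  rw [← integrableOn_univ, ← Iic_union_Ioi (a := m)]
  refine IntegrableOn.union ?_ ?_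
  · exact IntegrableOn.congr_fun (intOn_Iic b m m hb)
      (fun x hx => by rw [abs_of_nonpos (sub_nonpos.mpr hx), neg_neg]) measurableSet_Iic
  · exact IntegrableOn.congr_fun (intOn_Ioi b m m hb)
      (fun x hx => by rw [abs_of_pos (sub_pos.mpr hx)]) measurableSet_Ioi

lemma E_Iic_left (b m c : ℝ) (hb : 0 < b) (hcm : c ≤ m) :
    ∫ x in Iic c, Real.exp (-|x - m| / b) = b * Real.exp ((c - m) / b) := by
  rw [← int_Iic b m c hb]
  refine setIntegral_congr_fun measurableSet_Iic (fun x hx => ?_)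
  rw [abs_of_nonpos (sub_nonpos.mpr (le_trans hx hcm)), neg_neg]

lemma E_Ioi_right (b m c : ℝ) (hb : 0 < b) (hmc : m ≤ c) :
    ∫ x in Ioi c, Real.exp (-|x - m| / b) = b * Real.exp (-(c - m) / b) := by
  rw [← int_Ioi b m c hb]
  refine setIntegral_congr_fun measurableSet_Ioi (fun x hx => ?_)
  rw [abs_of_pos (sub_pos.mpr (lt_of_le_of_lt hmc hx))]

lemma E_Iic_right (b m c : ℝ) (hb : 0 < b) (hmc : m ≤ c) :
    ∫ x in Iic c, Real.exp (-|x - m| / b) = 2 * b - b * Real.exp (-(c - m) / b) := by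
  have hsplit : (∫ x in Iic c, Real.exp (-|x - m| / b))
      + ∫ x in Ioi c, Real.exp (-|x - m| / b) = ∫ x, Real.exp (-|x - m| / b) := by
    have := integral_add_compl (measurableSet_Iic (a := c)) (int_E b m hb)
    rwa [compl_Iic] at this
  have htot : ∫ x, Real.exp (-|x - m| / b) = 2 * b := by
    have h2 : (∫ x in Iic m, Real.exp (-|x - m| / b))
        + ∫ x in Ioi m, Real.exp (-|x - m| / b) = ∫ x, Real.exp (-|x - m| / b) := by
      have := integral_add_compl (measurableSet_Iic (a := m)) (int_E b m hb)
      rwa [compl_Iic] at this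
    rw [← h2, E_Iic_left b m m hb le_rfl, E_Ioi_right b m m hb le_rfl]
    simp; ring
  rw [E_Ioi_right b m c hb hmc, htot] at hsplit
  linarith

lemma key3aux (b ε m m' : ℝ) (hb : 0 < b) (hε : 0 ≤ ε) (hmm : m ≤ m') :
    ∫ x, max (1 / (2 * b) * Real.exp (-|x - m| / b)
        - Real.exp ε * (1 / (2 * b) * Real.exp (-|x - m'| / b))) 0
      = max 0 (1 - Real.exp ((ε - (m' - m) / b) / 2)) := by
  have hbne : b ≠ 0 := hb.ne'
  have h2b : (0:ℝ) < 1 / (2 * b) := by positivity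
  rcases le_or_gt (m' - m) (ε * b) with hcase | hcase
  · have hzero : (fun x => max (1 / (2 * b) * Real.exp (-|x - m| / b)
        - Real.exp ε * (1 / (2 * b) * Real.exp (-|x - m'| / b))) 0) = fun _ => (0:ℝ) := by
      funext x
      refine max_eq_right (sub_nonpos.mpr ?_)
      have habs : |x - m'| - |x - m| ≤ m' - m := by
        have h1 := abs_sub_abs_le_abs_sub (x - m') (x - m)
        have h2 : |x - m' - (x - m)| = m' - m := by
          rw [show x - m' - (x - m) = -(m' - m) by ring, abs_neg,
            abs_of_nonneg (by linarith)]
        linarith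
      have hexp : -|x - m| / b ≤ ε - |x - m'| / b := by
        have nd1 : -|x - m| / b = -(|x - m| / b) := neg_div _ _
        have hd : (|x - m'| - |x - m|) / b ≤ ε :=
          (div_le_iff₀ hb).mpr (by linarith)
        have hsd := sub_div (|x - m'|) (|x - m|) b
        linarith
      calc 1 / (2 * b) * Real.exp (-|x - m| / b)
          ≤ 1 / (2 * b) * Real.exp (ε - |x - m'| / b) :=
            mul_le_mul_of_nonneg_left (Real.exp_le_exp.mpr hexp) h2b.le
        _ = Real.exp ε * (1 / (2 * b) * Real.exp (-|x - m'| / b)) := by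
            rw [show ε - |x - m'| / b = ε + -|x - m'| / b from by ring, Real.exp_add]
            ring
    rw [hzero, integral_zero]
    have hone : (1:ℝ) ≤ Real.exp ((ε - (m' - m) / b) / 2) := by
      rw [show (1:ℝ) = Real.exp 0 from (Real.exp_zero).symm]
      apply Real.exp_le_exp.mpr
      have : (m' - m) / b ≤ ε := (div_le_iff₀ hb).mpr (by linarith)
      linarith
    rw [max_eq_left (by linarith)]
  · set c : ℝ := (m + m' - ε * b) / 2 with hc
    have hεb : 0 ≤ ε * b := mul_nonneg hε hb.le
    have hmc : m ≤ c := by rw [hc]; linarith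
    have hcm' : c ≤ m' := by rw [hc]; linarith
    have claim : ∀ x : ℝ, (0 < 1 / (2 * b) * Real.exp (-|x - m| / b)
        - Real.exp ε * (1 / (2 * b) * Real.exp (-|x - m'| / b))) ↔ x < c := by
      intro x
      have hrw : 1 / (2 * b) * Real.exp (-|x - m| / b)
          - Real.exp ε * (1 / (2 * b) * Real.exp (-|x - m'| / b))
          = 1 / (2 * b) * (Real.exp (-|x - m| / b) - Real.exp (ε - |x - m'| / b)) := by
        rw [show ε - |x - m'| / b = ε + -|x - m'| / b from by ring, Real.exp_add]
        ring
      rw [hrw]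
      have nd1 : -|x - m| / b = -(|x - m| / b) := neg_div _ _
      have nd2 : -|x - m'| / b = -(|x - m'| / b) := neg_div _ _
      have e1 : |x - m'| / b * b = |x - m'| := div_mul_cancel₀ _ hbne
      have e2 : |x - m| / b * b = |x - m| := div_mul_cancel₀ _ hbne
      constructor
      · intro H
        have hAB : Real.exp (ε - |x - m'| / b) < Real.exp (-|x - m| / b) := by nlinarith
        have hlin : ε - |x - m'| / b < -|x - m| / b := Real.exp_lt_exp.mp hAB
        have habs : ε * b < |x - m'| - |x - m| := by nlinarith
        by_contra hxc
        push_neg at hxc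
        rw [hc] at hxc
        have h1 : |x - m'| ≤ x - m + ε * b :=
          abs_le.mpr ⟨by linarith, by linarith⟩
        have h2 : x - m ≤ |x - m| := le_abs_self _
        linarith
      · intro H
        have hxm' : x < m' := lt_of_lt_of_le H hcm'
        have eabs : |x - m'| = m' - x := by
          rw [abs_sub_comm, abs_of_pos (by linarith)]
        have hHc : x < (m + m' - ε * b) / 2 := by rw [hc] at H; exact H
        have h3 : |x - m| < m' - x - ε * b :=
          abs_lt.mpr ⟨by linarith, by linarith⟩
        have hlin : ε - |x - m'| / b < -|x - m| / b := by
          have h4 : (ε * b) / b < (|x - m'| - |x - m|) / b := by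
            apply div_lt_div_of_pos_right ?_ hb
            · rw [eabs]; linarith
          have h5 : (ε * b) / b = ε := by field_simp
          have hsd := sub_div (|x - m'|) (|x - m|) b
          linarith
        have hAB := Real.exp_lt_exp.mpr hlin
        nlinarith [Real.exp_pos (ε - |x - m'| / b), Real.exp_pos (-|x - m| / b)]
    have hset : (fun x => max (1 / (2 * b) * Real.exp (-|x - m| / b)
        - Real.exp ε * (1 / (2 * b) * Real.exp (-|x - m'| / b))) 0)
        = Set.indicator (Iio c) (fun x => 1 / (2 * b) * Real.exp (-|x - m| / b)
          - Real.exp ε * (1 / (2 * b) * Real.exp (-|x - m'| / b))) := by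
      funext x
      rw [Set.indicator_apply]
      split_ifs with hx
      · exact max_eq_left ((claim x).mpr hx).le
      · exact max_eq_right (not_lt.mp fun hp => hx ((claim x).mp hp))
    rw [hset, integral_indicator measurableSet_Iio,
      setIntegral_congr_set Iio_ae_eq_Iic]
    have Im : IntegrableOn (fun x => 1 / (2 * b) * Real.exp (-|x - m| / b)) (Iic c) :=
      (((int_E b m hb).const_mul (1 / (2 * b)))).integrableOn
    have Im' : IntegrableOn
        (fun x => Real.exp ε * (1 / (2 * b) * Real.exp (-|x - m'| / b))) (Iic c) :=
      ((((int_E b m' hb).const_mul (1 / (2 * b))).const_mul (Real.exp ε))).integrableOn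
    rw [integral_sub Im Im', integral_const_mul, integral_const_mul, integral_const_mul,
      E_Iic_right b m c hb hmc, E_Iic_left b m' c hb hcm']
    have hC : (0:ℝ) ≤ 1 - Real.exp ((ε - (m' - m) / b) / 2) := by
      have harg : (ε - (m' - m) / b) / 2 < 0 := by
        have : ε < (m' - m) / b := (lt_div_iff₀ hb).mpr (by linarith)
        linarith
      have := Real.exp_lt_exp.mpr harg
      rw [Real.exp_zero] at this
      linarith
    rw [max_eq_right hC]
    have eA : Real.exp (-(c - m) / b) = Real.exp ((ε - (m' - m) / b) / 2) := by
      rw [hc]; congr 1; field_simp; ring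
    have eB : Real.exp ε * Real.exp ((c - m') / b)
        = Real.exp ((ε - (m' - m) / b) / 2) := by
      rw [← Real.exp_add, hc]; congr 1; field_simp; ring
    rw [eA, show Real.exp ε * (1 / (2 * b) * (b * Real.exp ((c - m') / b)))
      = 1 / (2 * b) * (b * (Real.exp ε * Real.exp ((c - m') / b))) from by ring, eB]
    field_simp
    ring


lemma lap_apply (m b : ℝ) (hb : 0 < b) {S : Set ℝ} (hS : MeasurableSet S) :
    ((lapMeasure m b) S).toReal = ∫ x in S, 1 / (2 * b) * Real.exp (-|x - m| / b) := by
  have hInt : Integrable (fun x => 1 / (2 * b) * Real.exp (-|x - m| / b)) :=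
    (int_E b m hb).const_mul _
  have hnn : ∀ x : ℝ, 0 ≤ 1 / (2 * b) * Real.exp (-|x - m| / b) := fun x => by positivity
  rw [lapMeasure, withDensity_apply _ hS,
    ← ofReal_integral_eq_lintegral_ofReal hInt.integrableOn
      (Filter.Eventually.of_forall fun x => hnn x),
    ENNReal.toReal_ofReal (integral_nonneg fun x => hnn x)]

end LapAux

/-- **Privacy profile of the Laplace mechanism.**
Let `b > 0`, `ε ≥ 0` and `m, m' ∈ ℝ` with `r = |m − m'|`. Then the hockey-stick
divergence satisfies
`sup_S [Lap(m,b)(S) − e^ε Lap(m',b)(S)] = max(0, 1 − e^{(ε − r/b)/2})`.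
In particular, the privacy profile of the Laplace mechanism with scale `b` on a query
of global `ℓ₁`-sensitivity `Δ₁` is `δ_F(ε) = [1 − e^{(ε − Δ₁/b)/2}]₊`. -/
theorem laplace_privacy_profile (b ε m m' : ℝ) (hb : 0 < b) (hε : 0 ≤ ε)
    (r : ℝ) (hr : r = |m - m'|) :
    (⨆ S : {S : Set ℝ // MeasurableSet S},
        ((lapMeasure m b) S.1).toReal - Real.exp ε * ((lapMeasure m' b) S.1).toReal)
      = max 0 (1 - Real.exp ((ε - r / b) / 2)) := by
  haveI : Nonempty {S : Set ℝ // MeasurableSet S} := ⟨⟨∅, MeasurableSet.empty⟩⟩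
  set h : ℝ → ℝ := fun x => 1 / (2 * b) * Real.exp (-|x - m| / b)
    - Real.exp ε * (1 / (2 * b) * Real.exp (-|x - m'| / b)) with hh
  have Im : Integrable (fun x => 1 / (2 * b) * Real.exp (-|x - m| / b)) :=
    (int_E b m hb).const_mul _
  have Im' : Integrable (fun x => Real.exp ε * (1 / (2 * b) * Real.exp (-|x - m'| / b))) :=
    ((int_E b m' hb).const_mul _).const_mul _
  have Ih : Integrable h := Im.sub Im'
  have Ihp : Integrable (fun x => max (h x) 0) := Ih.pos_part
  have key : ∀ S : Set ℝ, MeasurableSet S →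
      ((lapMeasure m b) S).toReal - Real.exp ε * ((lapMeasure m' b) S).toReal
        = ∫ x in S, h x := by
    intro S hS
    rw [lap_apply m b hb hS, lap_apply m' b hb hS, ← integral_const_mul,
      ← integral_sub Im.integrableOn Im'.integrableOn]
  have hub : ∀ S : Set ℝ, MeasurableSet S →
      ((lapMeasure m b) S).toReal - Real.exp ε * ((lapMeasure m' b) S).toReal
        ≤ ∫ x, max (h x) 0 := by
    intro S hS
    rw [key S hS]
    calc ∫ x in S, h x ≤ ∫ x in S, max (h x) 0 :=
          setIntegral_mono Ih.integrableOn Ihp.integrableOn fun x => le_max_left _ _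
      _ ≤ ∫ x, max (h x) 0 :=
          setIntegral_le_integral Ihp (Filter.Eventually.of_forall fun x => le_max_right _ _)
  have hcont : Continuous h := by fun_prop
  have hS₀ : MeasurableSet {x : ℝ | 0 < h x} :=
    (isOpen_lt continuous_const hcont).measurableSet
  have hattain : ((lapMeasure m b) {x : ℝ | 0 < h x}).toReal
      - Real.exp ε * ((lapMeasure m' b) {x : ℝ | 0 < h x}).toReal = ∫ x, max (h x) 0 := by
    rw [key _ hS₀, ← integral_indicator hS₀]
    congr 1
    funext x
    rw [Set.indicator_apply]
    split_ifs with hx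
    · exact (max_eq_left (le_of_lt hx)).symm
    · exact (max_eq_right (not_lt.mp hx)).symm
  have hsup : (⨆ S : {S : Set ℝ // MeasurableSet S},
      ((lapMeasure m b) S.1).toReal - Real.exp ε * ((lapMeasure m' b) S.1).toReal)
      = ∫ x, max (h x) 0 := by
    apply le_antisymm
    · exact ciSup_le fun S => hub S.1 S.2
    · have hbdd : BddAbove (Set.range fun S : {S : Set ℝ // MeasurableSet S} =>
          ((lapMeasure m b) S.1).toReal - Real.exp ε * ((lapMeasure m' b) S.1).toReal) := by
        refine ⟨∫ x, max (h x) 0, ?_⟩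
        rintro y ⟨S, rfl⟩
        exact hub S.1 S.2
      rw [← hattain]
      exact le_ciSup hbdd ⟨{x : ℝ | 0 < h x}, hS₀⟩
  rw [hsup]
  rcases le_total m m' with hmm | hmm
  · have hrr : r = m' - m := by
      rw [hr, abs_sub_comm, abs_of_nonneg (sub_nonneg.mpr hmm)]
    rw [hrr]
    exact key3aux b ε m m' hb hε hmm
  · have hrr : r = m - m' := by rw [hr, abs_of_nonneg (sub_nonneg.mpr hmm)]
    rw [hrr, ← key3aux b ε m' m hb hε hmm]
    have hrefl : ∀ x : ℝ, max (h x) 0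
        = (fun y => max (1 / (2 * b) * Real.exp (-|y - m'| / b)
            - Real.exp ε * (1 / (2 * b) * Real.exp (-|y - m| / b))) 0) ((m + m') - x) := by
      intro x
      simp only [hh]
      rw [show |m + m' - x - m'| = |x - m| from by rw [abs_sub_comm]; congr 1; ring,
        show |m + m' - x - m| = |x - m'| from by rw [abs_sub_comm]; congr 1; ring]
    calc ∫ x, max (h x) 0
        = ∫ x, (fun y => max (1 / (2 * b) * Real.exp (-|y - m'| / b)
            - Real.exp ε * (1 / (2 * b) * Real.exp (-|y - m| / b))) 0) ((m + m') - x) := by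
          simp_rw [← hrefl]
      _ = ∫ y, max (1 / (2 * b) * Real.exp (-|y - m'| / b)
            - Real.exp ε * (1 / (2 * b) * Real.exp (-|y - m| / b))) 0 :=
          integral_sub_left_eq_self (fun y => max (1 / (2 * b) * Real.exp (-|y - m'| / b)
            - Real.exp ε * (1 / (2 * b) * Real.exp (-|y - m| / b))) 0) volume (m + m')
end

section
/- Let b > 0 and m, m' ∈ ℝ with |m − m'| ≤ Δ₁, and let ε ≥ Δ₁/b. Then for every measurable S ⊆ ℝ, Lap(m, b)(S) ≤ e^ε Lap(m', b)(S), where Lap(m, b) is the measure on ℝ with density x ↦ (1/(2b)) exp(−|x − m|/b). (The Laplace mechanism with scale b ≥ Δ₁/ε is ε-differentially private for queries of global ℓ₁-sensitivity Δ₁.) -/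
open MeasureTheory

/-- **The Laplace mechanism with scale `b ≥ Δ₁/ε` is `ε`-differentially private.**
Let `b > 0`, `m, m' ∈ ℝ` with `|m − m'| ≤ Δ₁`, and `ε ≥ Δ₁/b`. Then for every
measurable `S ⊆ ℝ`, `Lap(m, b)(S) ≤ e^ε Lap(m', b)(S)`. -/
theorem laplace_mechanism_pure_dp (b Δ₁ ε m m' : ℝ) (hb : 0 < b)
    (hmm : |m - m'| ≤ Δ₁) (hε : Δ₁ / b ≤ ε)
    (S : Set ℝ) (hS : MeasurableSet S) :
    lapMeasure m b S ≤ ENNReal.ofReal (Real.exp ε) * lapMeasure m' b S := by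
  rw [lapMeasure, lapMeasure, withDensity_apply _ hS, withDensity_apply _ hS,
    ← lintegral_const_mul' _ _ ENNReal.ofReal_ne_top]
  refine setLIntegral_mono' hS fun x _ => ?_
  rw [← ENNReal.ofReal_mul (Real.exp_pos ε).le]
  apply ENNReal.ofReal_le_ofReal
  rw [show Real.exp ε * (1 / (2 * b) * Real.exp (-|x - m'| / b))
      = 1 / (2 * b) * (Real.exp (ε + -|x - m'| / b)) by rw [Real.exp_add]; ring]
  refine mul_le_mul_of_nonneg_left (Real.exp_le_exp.2 ?_) (by positivity)
  have h1 : |x - m'| - |x - m| ≤ |m - m'| := by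
    have := abs_sub_abs_le_abs_sub (x - m') (x - m)
    rw [show (x - m') - (x - m) = m - m' by ring] at this
    linarith
  have h2 : (|x - m'| - |x - m|) / b ≤ ε :=
    le_trans (div_le_div_of_nonneg_right (le_trans h1 hmm) hb.le |>.trans_eq rfl) hε
  have : -|x - m| / b - -|x - m'| / b = (|x - m'| - |x - m|) / b := by ring
  linarith [h2, this ▸ h2]
end

section
/- Let ε > 0, let j ≥ 1 be an integer, let δ ≥ 0, and let μ₀, μ₁, …, μ_j be probability measures on a measurable space Y such that for every i ∈ {1, …, j} the hockey-stick divergence satisfies D_{e^{ε/j}}(μ_{i−1}‖μ_i) ≤ δ, i.e., μ_{i−1}(S) ≤ e^{ε/j} μ_i(S) + δ for all measurable S. Then D_{e^ε}(μ₀‖μ_j) ≤ ((e^ε − 1)/(e^{ε/j} − 1)) · δ, i.e., μ₀(S) ≤ e^ε μ_j(S) + ((e^ε − 1)/(e^{ε/j} − 1)) δ for all measurable S. (Group privacy: the group privacy profile satisfies δ_{F,j}(ε) ≤ ((e^ε − 1)/(e^{ε/j} − 1)) · δ_F(ε/j).) -/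
open MeasureTheory

/-- **Group privacy for the hockey-stick divergence.**
Let `ε > 0`, `j ≥ 1`, `δ ≥ 0`, and let `μ 0, μ 1, …, μ j` be probability measures on a
measurable space `Y` such that each consecutive pair satisfies
`D_{e^{ε/j}}(μ i ‖ μ (i+1)) ≤ δ`, i.e. `μ i (S) ≤ e^{ε/j} μ (i+1) (S) + δ` for all
measurable `S`. Then `D_{e^ε}(μ 0 ‖ μ j) ≤ ((e^ε − 1)/(e^{ε/j} − 1)) δ`, i.e.
`μ 0 (S) ≤ e^ε μ j (S) + ((e^ε − 1)/(e^{ε/j} − 1)) δ` for all measurable `S`. -/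
theorem group_privacy_hockey_stick {Y : Type*} [MeasurableSpace Y]
    (ε δ : ℝ) (hε : 0 < ε) (hδ : 0 ≤ δ) (j : ℕ) (hj : 1 ≤ j)
    (μ : ℕ → Measure Y) (hprob : ∀ i, IsProbabilityMeasure (μ i))
    (hstep : ∀ i < j, ∀ S : Set Y, MeasurableSet S →
      ((μ i) S).toReal ≤ Real.exp (ε / j) * ((μ (i + 1)) S).toReal + δ)
    (S : Set Y) (hS : MeasurableSet S) :
    ((μ 0) S).toReal
      ≤ Real.exp ε * ((μ j) S).toReal
          + (Real.exp ε - 1) / (Real.exp (ε / j) - 1) * δ := by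
  have hj0 : 0 < (j : ℝ) := by exact_mod_cast hj
  set c := Real.exp (ε / j) with hc
  have hc1 : 1 < c := by rw [hc, ← Real.exp_zero]; exact Real.exp_lt_exp.mpr (by positivity)
  have key : ∀ i ≤ j, ((μ 0) S).toReal ≤
      c ^ i * ((μ i) S).toReal + (∑ k ∈ Finset.range i, c ^ k) * δ := by
    intro i hi
    induction i with
    | zero => simp
    | succ n ih =>
      have hn : n ≤ j := Nat.le_of_succ_le hi
      have h1 := ih hn
      have h2 := hstep n (Nat.lt_of_succ_le hi) S hS
      calc ((μ 0) S).toReal ≤ c ^ n * ((μ n) S).toReal + (∑ k ∈ Finset.range n, c ^ k) * δ := h1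
        _ ≤ c ^ n * (c * ((μ (n+1)) S).toReal + δ) + (∑ k ∈ Finset.range n, c ^ k) * δ := by
            gcongr
        _ = c ^ (n+1) * ((μ (n+1)) S).toReal + (∑ k ∈ Finset.range (n+1), c ^ k) * δ := by
            rw [Finset.sum_range_succ]
            ring
  have h := key j le_rfl
  have hcj : c ^ j = Real.exp ε := by
    rw [hc, ← Real.exp_nat_mul]
    field_simp
  have hsum : (∑ k ∈ Finset.range j, c ^ k) = (Real.exp ε - 1) / (c - 1) := by
    rw [geom_sum_eq (ne_of_gt hc1), hcj]
  rw [hcj, hsum] at h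
  linarith
end

section
/- Let γ ≥ 0 and let f, g : ℝⁿ → [0,∞) be measurable and Lebesgue-integrable, and let μ and ν be the measures on ℝⁿ with densities f and g respectively with respect to Lebesgue measure. Then the hockey-stick divergence admits the integral representation: sup over measurable S ⊆ ℝⁿ of (μ(S) − γ ν(S)) = ∫_{ℝⁿ} max(f(z) − γ g(z), 0) dz, with the supremum attained at S = {z : f(z) ≥ γ g(z)}. -/
open MeasureTheory

/-- **Integral representation of the hockey-stick divergence.**
Let `γ ≥ 0` and let `f, g : ℝⁿ → [0,∞)` be measurable and integrable, with associated
measures `μ = f·vol` and `ν = g·vol`. Then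
`sup_S (μ(S) − γ ν(S)) = ∫ max(f − γ g, 0)`, and the supremum is attained at
`S = {z : f z ≥ γ g z}`. -/
theorem hockey_stick_integral_representation {n : ℕ} (γ : ℝ) (hγ : 0 ≤ γ)
    (f g : (Fin n → ℝ) → ℝ) (hfmeas : Measurable f) (hgmeas : Measurable g)
    (hf0 : ∀ z, 0 ≤ f z) (hg0 : ∀ z, 0 ≤ g z)
    (hfint : Integrable f) (hgint : Integrable g) :
    (⨆ S : {S : Set (Fin n → ℝ) // MeasurableSet S},
        ((volume.withDensity fun z => ENNReal.ofReal (f z)) S.1).toReal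
          - γ * ((volume.withDensity fun z => ENNReal.ofReal (g z)) S.1).toReal)
      = ∫ z, max (f z - γ * g z) 0
    ∧ ((volume.withDensity fun z => ENNReal.ofReal (f z))
          {z : Fin n → ℝ | γ * g z ≤ f z}).toReal
        - γ * ((volume.withDensity fun z => ENNReal.ofReal (g z))
            {z : Fin n → ℝ | γ * g z ≤ f z}).toReal
      = ∫ z, max (f z - γ * g z) 0 := by
  -- densities give set integrals
  have key : ∀ (h : (Fin n → ℝ) → ℝ), Measurable h → (∀ z, 0 ≤ h z) → Integrable h →
      ∀ (S : Set (Fin n → ℝ)), MeasurableSet S →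
      ((volume.withDensity fun z => ENNReal.ofReal (h z)) S).toReal = ∫ z in S, h z := by
    intro h hm h0 hint S hS
    rw [withDensity_apply _ hS,
      MeasureTheory.integral_eq_lintegral_of_nonneg_ae (Filter.Eventually.of_forall h0)
        hm.aestronglyMeasurable.restrict]
  have hsubint : Integrable (fun z => f z - γ * g z) := hfint.sub (hgint.const_mul γ)
  have hmaxint : Integrable (fun z => max (f z - γ * g z) 0) := hsubint.pos_part
  have hT : MeasurableSet {z : Fin n → ℝ | γ * g z ≤ f z} :=
    measurableSet_le (hgmeas.const_mul γ) hfmeas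
  -- value at any measurable S
  have hval : ∀ (S : Set (Fin n → ℝ)), MeasurableSet S →
      ((volume.withDensity fun z => ENNReal.ofReal (f z)) S).toReal
        - γ * ((volume.withDensity fun z => ENNReal.ofReal (g z)) S).toReal
      = ∫ z in S, (f z - γ * g z) := by
    intro S hS
    rw [key f hfmeas hf0 hfint S hS, key g hgmeas hg0 hgint S hS,
      integral_sub (hfint.restrict) ((hgint.const_mul γ).restrict), integral_const_mul]
  -- bound for any S
  have hbound : ∀ (S : Set (Fin n → ℝ)), MeasurableSet S →
      ∫ z in S, (f z - γ * g z) ≤ ∫ z, max (f z - γ * g z) 0 := by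
    intro S hS
    calc ∫ z in S, (f z - γ * g z) ≤ ∫ z in S, max (f z - γ * g z) 0 :=
          setIntegral_mono hsubint.restrict hmaxint.restrict (fun z => le_max_left _ _)
      _ ≤ ∫ z, max (f z - γ * g z) 0 :=
          setIntegral_le_integral hmaxint (Filter.Eventually.of_forall fun z => le_max_right _ _)
  -- attainment
  have hatt : ∫ z in {z : Fin n → ℝ | γ * g z ≤ f z}, (f z - γ * g z)
      = ∫ z, max (f z - γ * g z) 0 := by
    rw [← integral_add_compl hT hmaxint]
    have h1 : ∫ z in {z : Fin n → ℝ | γ * g z ≤ f z}, max (f z - γ * g z) 0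
        = ∫ z in {z : Fin n → ℝ | γ * g z ≤ f z}, (f z - γ * g z) := by
      apply setIntegral_congr_fun hT
      intro z hz
      exact max_eq_left (by simp only [Set.mem_setOf_eq] at hz; linarith)
    have h2 : ∫ z in {z : Fin n → ℝ | γ * g z ≤ f z}ᶜ, max (f z - γ * g z) 0 = 0 := by
      apply setIntegral_eq_zero_of_forall_eq_zero
      intro z hz
      simp only [Set.mem_compl_iff, Set.mem_setOf_eq, not_le] at hz
      exact max_eq_right (by linarith)
    rw [h1, h2, add_zero]
  have hub : ∀ S : {S : Set (Fin n → ℝ) // MeasurableSet S},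
      ((volume.withDensity fun z => ENNReal.ofReal (f z)) S.1).toReal
        - γ * ((volume.withDensity fun z => ENNReal.ofReal (g z)) S.1).toReal
      ≤ ∫ z, max (f z - γ * g z) 0 := by
    rintro ⟨S, hS⟩
    rw [hval S hS]
    exact hbound S hS
  constructor
  · apply le_antisymm
    · exact ciSup_le hub
    · rw [← hatt, ← hval _ hT]
      exact le_ciSup ⟨∫ z, max (f z - γ * g z) 0, Set.forall_mem_range.2 hub⟩ ⟨_, hT⟩
  · rw [hval _ hT]; exact hatt
end

section
/- Let n ≥ 1, let G be a nonsingular real n×n matrix, let P ⊆ ℝⁿ be a basic cell of the lattice Gℤⁿ with lattice quantizer Q_P. Let X be any ℝⁿ-valued random vector and let V be uniform on P and independent of X. Define the subtractive-dithered quantization error Z := Q_P(X − V) + V − X. Then Z is distributed Unif(P) and Z is independent of X. (The SDQ quantization error is uniform over the basic cell and statistically independent of the input signal, regardless of the input's distribution.) -/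
open MeasureTheory ProbabilityTheory

section Aux

variable {n : ℕ} {G : Matrix (Fin n) (Fin n) ℝ} {P : Set (Fin n → ℝ)}

private lemma mulVec_neg_cast (j : Fin n → ℤ) :
    G.mulVec (fun i => ((-j) i : ℝ)) = - G.mulVec (fun i => (j i : ℝ)) := by
  have : (fun i => ((-j) i : ℝ)) = -(fun i => (j i : ℝ)) := by
    funext i; simp
  rw [this, Matrix.mulVec_neg]

/-- Reformulated partition property: for every `v` there is a unique `j` with
`v + G j ∈ P`. -/
private lemma part_unique'
    (hpart : ∀ x : Fin n → ℝ, ∃! j : Fin n → ℤ,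
      x - G.mulVec (fun i => (j i : ℝ)) ∈ P) (v : Fin n → ℝ) :
    ∃! j : Fin n → ℤ, v + G.mulVec (fun i => (j i : ℝ)) ∈ P := by
  obtain ⟨j, hj, hju⟩ := hpart v
  refine ⟨-j, ?_, ?_⟩
  · show v + G.mulVec (fun i => ((-j) i : ℝ)) ∈ P
    rw [mulVec_neg_cast, ← sub_eq_add_neg]; exact hj
  · intro k hk
    have : v - G.mulVec (fun i => ((-k) i : ℝ)) ∈ P := by
      rw [mulVec_neg_cast, sub_neg_eq_add]; exact hk
    have := hju _ this
    rw [← this]; simp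

/-- The quantizer is determined: if `G j - y ∈ P` then `QP y = G j`. -/
private lemma quant_char
    (hpart : ∀ x : Fin n → ℝ, ∃! j : Fin n → ℤ,
      x - G.mulVec (fun i => (j i : ℝ)) ∈ P)
    {QP : (Fin n → ℝ) → (Fin n → ℝ)}
    (hQlat : ∀ y : Fin n → ℝ, ∃ j : Fin n → ℤ, QP y = G.mulVec (fun i => (j i : ℝ)))
    (hQcell : ∀ y : Fin n → ℝ, QP y - y ∈ P)
    (y : Fin n → ℝ) (j : Fin n → ℤ)
    (h : G.mulVec (fun i => (j i : ℝ)) - y ∈ P) :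
    QP y = G.mulVec (fun i => (j i : ℝ)) := by
  obtain ⟨j₀, hj₀⟩ := hQlat y
  have h₀ : G.mulVec (fun i => (j₀ i : ℝ)) - y ∈ P := hj₀ ▸ hQcell y
  obtain ⟨k, hk, hku⟩ := part_unique' hpart (-y)
  have m1 : -y + G.mulVec (fun i => (j i : ℝ)) ∈ P := by
    rw [neg_add_eq_sub]; exact h
  have m2 : -y + G.mulVec (fun i => (j₀ i : ℝ)) ∈ P := by
    rw [neg_add_eq_sub]; exact h₀
  have e1 : j = k := hku j m1
  have e2 : j₀ = k := hku j₀ m2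
  rw [hj₀, show j₀ = j from e2.trans e1.symm]

/-- Key measure identity: for each fixed `x`, the error map
`v ↦ QP (x - v) + v - x` pulls back any measurable `A` to a set whose
intersection with `P` has the same volume as `A ∩ P`. -/
private lemma key_vol (hPmeas : MeasurableSet P)
    (hpart : ∀ x : Fin n → ℝ, ∃! j : Fin n → ℤ,
      x - G.mulVec (fun i => (j i : ℝ)) ∈ P)
    {QP : (Fin n → ℝ) → (Fin n → ℝ)}
    (hQlat : ∀ y : Fin n → ℝ, ∃ j : Fin n → ℤ, QP y = G.mulVec (fun i => (j i : ℝ)))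
    (hQcell : ∀ y : Fin n → ℝ, QP y - y ∈ P)
    (x : Fin n → ℝ) {A : Set (Fin n → ℝ)} (hA : MeasurableSet A) :
    volume ((fun v => QP (x - v) + v - x) ⁻¹' A ∩ P) = volume (A ∩ P) := by
  classical
  set c : (Fin n → ℤ) → (Fin n → ℝ) := fun j => x - G.mulVec (fun i => (j i : ℝ)) with hc
  -- on the cell `v - c j ∈ P`, the quantizer picks `G j` and the error equals `v - c j`
  have hcell : ∀ (j : Fin n → ℤ) (v : Fin n → ℝ), v - c j ∈ P →
      QP (x - v) + v - x = v - c j := by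
    intro j v hv
    have h1 : G.mulVec (fun i => (j i : ℝ)) - (x - v) = v - c j := by
      rw [hc]; ring_nf
    have h2 := quant_char hpart hQlat hQcell (x - v) j (h1 ▸ hv)
    rw [h2, hc]; ring_nf
  set U : (Fin n → ℤ) → Set (Fin n → ℝ) :=
    fun j => P ∩ (fun v => v - c j) ⁻¹' (A ∩ P) with hU
  have hUmeas : ∀ j, MeasurableSet (U j) :=
    fun j => hPmeas.inter ((measurable_id.sub measurable_const) (hA.inter hPmeas))
  -- the preimage set is the disjoint union of the `U j`
  have hset : (fun v => QP (x - v) + v - x) ⁻¹' A ∩ P = ⋃ j, U j := by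
    ext v
    constructor
    · rintro ⟨hvA, hvP⟩
      obtain ⟨j, hj, -⟩ := part_unique' hpart (v - x)
      have hj' : v - c j ∈ P := by
        have : v - c j = v - x + G.mulVec (fun i => (j i : ℝ)) := by rw [hc]; ring_nf
        rw [this]; exact hj
      have he := hcell j v hj'
      exact Set.mem_iUnion.2 ⟨j, hvP, by rw [Set.mem_preimage, ← he]; exact ⟨hvA, he ▸ hj'⟩⟩
    · intro hv
      obtain ⟨j, hvP, hvpre⟩ := Set.mem_iUnion.1 hv
      obtain ⟨hvA, hvP'⟩ := hvpre
      have he := hcell j v hvP'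
      exact ⟨by rw [Set.mem_preimage, he]; exact hvA, hvP⟩
  have hUdisj : Pairwise (Function.onFun Disjoint U) := by
    intro j k hjk
    refine Set.disjoint_left.2 ?_
    rintro v ⟨-, -, hvj⟩ ⟨-, -, hvk⟩
    obtain ⟨m, -, hmu⟩ := part_unique' hpart (v - x)
    have hj' : v - x + G.mulVec (fun i => (j i : ℝ)) ∈ P := by
      have : v - x + G.mulVec (fun i => (j i : ℝ)) = v - c j := by rw [hc]; ring_nf
      rw [this]; exact hvj
    have hk' : v - x + G.mulVec (fun i => (k i : ℝ)) ∈ P := by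
      have : v - x + G.mulVec (fun i => (k i : ℝ)) = v - c k := by rw [hc]; ring_nf
      rw [this]; exact hvk
    exact hjk ((hmu j hj').trans (hmu k hk').symm)
  rw [hset, measure_iUnion hUdisj hUmeas]
  -- translate each `U j` back: volume (U j) = volume (W j)
  set W : (Fin n → ℤ) → Set (Fin n → ℝ) :=
    fun j => (fun w => w + c j) ⁻¹' P ∩ (A ∩ P) with hW
  have htrans : ∀ j, volume (U j) = volume (W j) := by
    intro j
    have : (fun w => w + c j) ⁻¹' (U j) = W j := by
      ext w
      simp only [hU, hW, Set.mem_inter_iff, Set.mem_preimage, add_sub_cancel_right]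
    rw [← this, measure_preimage_add_right]
  simp_rw [htrans]
  -- and these form a disjoint cover of `A ∩ P`
  have hWmeas : ∀ j, MeasurableSet (W j) :=
    fun j => ((measurable_id.add_const (c j)) hPmeas).inter (hA.inter hPmeas)
  have hWdisj : Pairwise (Function.onFun Disjoint W) := by
    intro j k hjk
    refine Set.disjoint_left.2 ?_
    rintro w ⟨hwj, -⟩ ⟨hwk, -⟩
    obtain ⟨m, -, hmu⟩ := part_unique' hpart (w + x)
    have hj' : w + x + -G.mulVec (fun i => (j i : ℝ)) ∈ P := by
      have : w + x + -G.mulVec (fun i => (j i : ℝ)) = w + c j := by rw [hc]; ring_nf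
      rw [this]; exact hwj
    have hk' : w + x + -G.mulVec (fun i => (k i : ℝ)) ∈ P := by
      have : w + x + -G.mulVec (fun i => (k i : ℝ)) = w + c k := by rw [hc]; ring_nf
      rw [this]; exact hwk
    rw [← mulVec_neg_cast] at hj' hk'
    have := (hmu (-j) hj').trans (hmu (-k) hk').symm
    exact hjk (neg_injective this)
  have hWcover : ⋃ j, W j = A ∩ P := by
    ext w
    constructor
    · rintro ⟨-, ⟨j, rfl⟩, -, hw⟩; exact hw
    · intro hw
      obtain ⟨j, hj, -⟩ := part_unique' hpart (w + x)
      refine Set.mem_iUnion.2 ⟨-j, ?_, hw⟩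
      have : w + c (-j) = w + x + G.mulVec (fun i => (j i : ℝ)) := by
        rw [hc]; show w + (x - G.mulVec fun i => ((-j) i : ℝ)) = _
        rw [mulVec_neg_cast]; abel
      rw [Set.mem_preimage, this]
      exact hj
  rw [← measure_iUnion hWdisj hWmeas, hWcover]

end Aux

/-- **The SDQ error is uniform over the basic cell and independent of the input.**
Let `P` be a basic cell of the lattice `Gℤⁿ` with lattice quantizer `Q_P`. Let `X` be
any `ℝⁿ`-valued random vector, and let `V ~ Unif(P)` be a dither independent of `X`.
Then the subtractive-dithered quantization error `Z = Q_P(X − V) + V − X` is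
distributed `Unif(P)` and is independent of `X`, regardless of the distribution
of `X`. -/
theorem sdq_error_uniform_and_independent {Ω : Type*} [MeasurableSpace Ω]
    (Pr : Measure Ω) [IsProbabilityMeasure Pr]
    {n : ℕ} (hn : 1 ≤ n)
    (G : Matrix (Fin n) (Fin n) ℝ) (hG : IsUnit G.det)
    (P : Set (Fin n → ℝ)) (hPmeas : MeasurableSet P) (hPbdd : Bornology.IsBounded P)
    (hP0 : 0 < volume P) (hPfin : volume P < ⊤)
    (hpart : ∀ x : Fin n → ℝ, ∃! j : Fin n → ℤ,
      x - G.mulVec (fun i => (j i : ℝ)) ∈ P)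
    (QP : (Fin n → ℝ) → (Fin n → ℝ)) (hQmeas : Measurable QP)
    (hQlat : ∀ y : Fin n → ℝ, ∃ j : Fin n → ℤ, QP y = G.mulVec (fun i => (j i : ℝ)))
    (hQcell : ∀ y : Fin n → ℝ, QP y - y ∈ P)
    (X V : Ω → (Fin n → ℝ)) (hX : Measurable X) (hV : Measurable V)
    (hVlaw : Measure.map V Pr = Unif P)
    (hXV : IndepFun X V Pr) :
    Measure.map (fun ω => QP (X ω - V ω) + V ω - X ω) Pr = Unif P
    ∧ IndepFun (fun ω => QP (X ω - V ω) + V ω - X ω) X Pr := by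
  classical
  have hν_apply : ∀ {s : Set (Fin n → ℝ)}, MeasurableSet s →
      Unif P s = (volume P)⁻¹ * volume (s ∩ P) := by
    intro s hs
    simp [Unif, Measure.smul_apply, Measure.restrict_apply hs, smul_eq_mul]
  have hνprob : IsProbabilityMeasure (Unif P) := by
    constructor
    rw [hν_apply MeasurableSet.univ, Set.univ_inter]
    exact ENNReal.inv_mul_cancel hP0.ne' hPfin.ne
  set μ := Measure.map X Pr with hμ
  have hμprob : IsProbabilityMeasure μ := Measure.isProbabilityMeasure_map hX.aemeasurable
  -- the error map is measure-preserving for each fixed x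
  have hfmeas : ∀ x : Fin n → ℝ, Measurable (fun v => QP (x - v) + v - x) :=
    fun x => ((hQmeas.comp (measurable_const.sub measurable_id)).add measurable_id).sub
      measurable_const
  have hL1 : ∀ (x : Fin n → ℝ) {A : Set (Fin n → ℝ)}, MeasurableSet A →
      Unif P ((fun v => QP (x - v) + v - x) ⁻¹' A) = Unif P A := by
    intro x A hA
    rw [hν_apply ((hfmeas x) hA), hν_apply hA,
      key_vol hPmeas hpart hQlat hQcell x hA]
  -- joint law of (X, V)
  have hjoint : Measure.map (fun ω => (X ω, V ω)) Pr = μ.prod (Unif P) := by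
    rw [(indepFun_iff_map_prod_eq_prod_map_map hX.aemeasurable hV.aemeasurable).mp hXV,
      hVlaw]
  set g : (Fin n → ℝ) × (Fin n → ℝ) → (Fin n → ℝ) × (Fin n → ℝ) :=
    fun p => (QP (p.1 - p.2) + p.2 - p.1, p.1) with hg
  have hgmeas : Measurable g :=
    (((hQmeas.comp (measurable_fst.sub measurable_snd)).add measurable_snd).sub
      measurable_fst).prodMk measurable_fst
  -- pushforward of the product measure under g is (Unif P) × μ
  have hmapg : Measure.map g (μ.prod (Unif P)) = (Unif P).prod μ := by
    refine (Measure.prod_eq ?_).symm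
    intro s t hs ht
    rw [Measure.map_apply hgmeas (hs.prod ht)]
    have hpre : g ⁻¹' (s ×ˢ t) =
        {p : (Fin n → ℝ) × (Fin n → ℝ) | QP (p.1 - p.2) + p.2 - p.1 ∈ s ∧ p.1 ∈ t} := by
      ext p; simp [hg, Set.mem_prod]
    rw [hpre, Measure.prod_apply]
    · have hint : ∀ x : Fin n → ℝ,
          Unif P (Prod.mk x ⁻¹'
            {p : (Fin n → ℝ) × (Fin n → ℝ) | QP (p.1 - p.2) + p.2 - p.1 ∈ s ∧ p.1 ∈ t})
          = t.indicator (fun _ => Unif P s) x := by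
        intro x
        by_cases hx : x ∈ t
        · have : Prod.mk x ⁻¹'
              {p : (Fin n → ℝ) × (Fin n → ℝ) | QP (p.1 - p.2) + p.2 - p.1 ∈ s ∧ p.1 ∈ t}
              = (fun v => QP (x - v) + v - x) ⁻¹' s := by
            ext v; simp [hx]
          rw [this, hL1 x hs, Set.indicator_of_mem hx]
        · have : Prod.mk x ⁻¹'
              {p : (Fin n → ℝ) × (Fin n → ℝ) | QP (p.1 - p.2) + p.2 - p.1 ∈ s ∧ p.1 ∈ t}
              = ∅ := by
            ext v; simp [hx]
          rw [this, Set.indicator_of_notMem hx, measure_empty]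
      simp_rw [hint]
      rw [lintegral_indicator ht, setLIntegral_const, mul_comm]
    · exact hgmeas (hs.prod ht)
  -- joint law of (Z, X)
  have hZXmeas : Measurable (fun ω => (QP (X ω - V ω) + V ω - X ω, X ω)) :=
    (((hQmeas.comp (hX.sub hV)).add hV).sub hX).prodMk hX
  have hZXlaw : Measure.map (fun ω => (QP (X ω - V ω) + V ω - X ω, X ω)) Pr
      = (Unif P).prod μ := by
    have hcomp : (fun ω => (QP (X ω - V ω) + V ω - X ω, X ω))
        = g ∘ (fun ω => (X ω, V ω)) := rfl
    rw [hcomp, ← Measure.map_map hgmeas (hX.prodMk hV), hjoint, hmapg]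
  have hZmeas : Measurable (fun ω => QP (X ω - V ω) + V ω - X ω) :=
    ((hQmeas.comp (hX.sub hV)).add hV).sub hX
  constructor
  · have hcomp : (fun ω => QP (X ω - V ω) + V ω - X ω)
        = Prod.fst ∘ (fun ω => (QP (X ω - V ω) + V ω - X ω, X ω)) := rfl
    rw [hcomp, ← Measure.map_map measurable_fst hZXmeas, hZXlaw,
      Measure.map_fst_prod, measure_univ, one_smul]
  · refine (indepFun_iff_map_prod_eq_prod_map_map hZmeas.aemeasurable
      hX.aemeasurable).mpr ?_
    rw [hZXlaw]
    congr 1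
    have hcomp : (fun ω => QP (X ω - V ω) + V ω - X ω)
        = Prod.fst ∘ (fun ω => (QP (X ω - V ω) + V ω - X ω, X ω)) := rfl
    rw [hcomp, ← Measure.map_map measurable_fst hZXmeas, hZXlaw,
      Measure.map_fst_prod, measure_univ, one_smul]
end
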